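/- arXiv:2603.23077 — 6 statements merged into one kernel-verified Lean document; each statement's English description precedes it below -/
import Mathlib

section
/- Suppose I is a connected component of D such that a(α) → m as α → inf I and a(α) → M as α → sup I (an interval of type I_{∞,0}). Then there exists a connected component J of D with a(α) → M as α → inf J and a(α) → m as α → sup J (an interval of type I_{0,∞}) such that sup I ≤ inf J. -/
open Set Filter Topology

/- If (x₁,x₂) is a connected component of D = {α ∈ (t',t'') : m < a(α) < M} of type I_{∞,0}
   (a → m at the left endpoint, a → M at the right endpoint), then there is a component
   (y₁,y₂) of type I_{0,∞} with x₂ ≤ y₁. -/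
theorem stmt5 (t' t'' m M : ℝ) (a : ℝ → ℝ)
    (ht' : 0 ≤ t') (ht : t' < t'')
    (ha_cont : ContinuousOn a (Icc t' t''))
    (ha_t' : a t' = 0) (ha_t'' : a t'' = 0)
    (ha_pos : ∀ α ∈ Ioo t' t'', 0 < a α)
    (hm : 0 ≤ m) (hmM : m < M)
    (D : Set ℝ) (hD : D = {α : ℝ | α ∈ Ioo t' t'' ∧ m < a α ∧ a α < M})
    (x₁ x₂ : ℝ) (hx₁ : t' ≤ x₁) (hx : x₁ < x₂) (hx₂ : x₂ ≤ t'')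
    (hsub : Ioo x₁ x₂ ⊆ D) (hx₁D : x₁ ∉ D) (hx₂D : x₂ ∉ D)
    (hlim₁ : Tendsto a (𝓝[>] x₁) (𝓝 m))
    (hlim₂ : Tendsto a (𝓝[<] x₂) (𝓝 M)) :
    ∃ y₁ y₂ : ℝ, x₂ ≤ y₁ ∧ y₁ < y₂ ∧ y₂ ≤ t'' ∧
      Ioo y₁ y₂ ⊆ D ∧ y₁ ∉ D ∧ y₂ ∉ D ∧
      Tendsto a (𝓝[>] y₁) (𝓝 M) ∧ Tendsto a (𝓝[<] y₂) (𝓝 m) := by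
  have ht'x₂ : t' < x₂ := lt_of_le_of_lt hx₁ hx
  have hx₂mem : x₂ ∈ Icc t' t'' := ⟨ht'x₂.le, hx₂⟩
  -- a x₂ = M
  have hax₂ : a x₂ = M := by
    have h1 : Tendsto a (𝓝[<] x₂) (𝓝 (a x₂)) := by
      refine (ha_cont x₂ hx₂mem).tendsto.mono_left (nhdsWithin_le_iff.mpr ?_)
      exact mem_of_superset (Ioo_mem_nhdsLT_of_mem ⟨ht'x₂, le_refl x₂⟩)
        (fun z hz => ⟨hz.1.le, le_trans hz.2.le hx₂⟩)
    exact tendsto_nhds_unique h1 hlim₂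
  have hx₂t'' : x₂ < t'' := by
    rcases lt_or_eq_of_le hx₂ with h | h
    · exact h
    · exfalso; rw [h, ha_t''] at hax₂; linarith
  -- the set where a drops to ≤ m on the right of x₂
  set S₂ : Set ℝ := {α ∈ Icc x₂ t'' | a α ≤ m} with hS₂def
  have hS₂closed : IsClosed S₂ := by
    have hcont : ContinuousOn a (Icc x₂ t'') :=
      ha_cont.mono (Icc_subset_Icc ht'x₂.le le_rfl)
    exact hcont.preimage_isClosed_of_isClosed isClosed_Icc isClosed_Iic
  have hS₂ne : S₂.Nonempty := ⟨t'', ⟨⟨hx₂, le_rfl⟩, by rw [ha_t'']; exact hm⟩⟩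
  have hS₂bdd : BddBelow S₂ := ⟨x₂, fun z hz => hz.1.1⟩
  set y₂ : ℝ := sInf S₂ with hy₂def
  have hy₂mem : y₂ ∈ S₂ := hS₂closed.csInf_mem hS₂ne hS₂bdd
  have hy₂le : y₂ ≤ t'' := hy₂mem.1.2
  have hx₂y₂ : x₂ < y₂ := by
    rcases lt_or_eq_of_le hy₂mem.1.1 with h | h
    · exact h
    · exfalso
      have : a x₂ ≤ m := by rw [h]; exact hy₂mem.2
      rw [hax₂] at this; linarith
  -- on [x₂, y₂), a > m
  have hgt : ∀ z ∈ Ico x₂ y₂, m < a z := by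
    intro z hz
    by_contra h
    push_neg at h
    have : z ∈ S₂ := ⟨⟨hz.1, hz.2.le.trans hy₂le⟩, h⟩
    exact absurd (csInf_le hS₂bdd this) (not_le.mpr hz.2)
  -- a y₂ = m
  have hy₂Icc : y₂ ∈ Icc t' t'' := ⟨ht'x₂.le.trans hx₂y₂.le, hy₂le⟩
  have hcwy₂ : Tendsto a (𝓝[Ico x₂ y₂] y₂) (𝓝 (a y₂)) :=
    ((ha_cont y₂ hy₂Icc).mono
      (fun z hz => ⟨ht'x₂.le.trans hz.1, hz.2.le.trans hy₂le⟩ :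
        Ico x₂ y₂ ⊆ Icc t' t'')).tendsto
  have hne₂ : (𝓝[Ico x₂ y₂] y₂).NeBot := by
    rw [← mem_closure_iff_nhdsWithin_neBot, closure_Ico hx₂y₂.ne]
    exact ⟨hx₂y₂.le, le_rfl⟩
  have hay₂ : a y₂ = m :=
    le_antisymm hy₂mem.2
      (ge_of_tendsto hcwy₂ (eventually_mem_nhdsWithin.mono fun z hz => (hgt z hz).le))
  -- the set where a ≥ M in [x₂, y₂]
  set S₁ : Set ℝ := {α ∈ Icc x₂ y₂ | M ≤ a α} with hS₁def
  have hS₁closed : IsClosed S₁ := by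
    have hcont : ContinuousOn a (Icc x₂ y₂) :=
      ha_cont.mono (Icc_subset_Icc ht'x₂.le hy₂le)
    exact hcont.preimage_isClosed_of_isClosed isClosed_Icc isClosed_Ici
  have hS₁ne : S₁.Nonempty := ⟨x₂, ⟨⟨le_rfl, hx₂y₂.le⟩, hax₂.ge⟩⟩
  have hS₁bdd : BddAbove S₁ := ⟨y₂, fun z hz => hz.1.2⟩
  set y₁ : ℝ := sSup S₁ with hy₁def
  have hy₁mem : y₁ ∈ S₁ := hS₁closed.csSup_mem hS₁ne hS₁bdd
  have hx₂y₁ : x₂ ≤ y₁ := le_csSup hS₁bdd ⟨⟨le_rfl, hx₂y₂.le⟩, hax₂.ge⟩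
  have hy₁y₂ : y₁ < y₂ := by
    rcases lt_or_eq_of_le hy₁mem.1.2 with h | h
    · exact h
    · exfalso
      have : M ≤ a y₂ := by rw [← h]; exact hy₁mem.2
      rw [hay₂] at this; linarith
  -- on (y₁, y₂], a < M
  have hlt : ∀ z ∈ Ioc y₁ y₂, a z < M := by
    intro z hz
    by_contra h
    push_neg at h
    have : z ∈ S₁ := ⟨⟨hx₂y₁.trans hz.1.le, hz.2⟩, h⟩
    exact absurd (le_csSup hS₁bdd this) (not_le.mpr hz.1)
  -- a y₁ = M
  have hy₁Icc : y₁ ∈ Icc t' t'' := ⟨ht'x₂.le.trans hx₂y₁, hy₁y₂.le.trans hy₂le⟩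
  have hcwy₁ : Tendsto a (𝓝[Ioc y₁ y₂] y₁) (𝓝 (a y₁)) :=
    ((ha_cont y₁ hy₁Icc).mono
      (fun z hz => ⟨ht'x₂.le.trans (hx₂y₁.trans hz.1.le), hz.2.trans hy₂le⟩ :
        Ioc y₁ y₂ ⊆ Icc t' t'')).tendsto
  have hne₁ : (𝓝[Ioc y₁ y₂] y₁).NeBot := by
    rw [← mem_closure_iff_nhdsWithin_neBot, closure_Ioc hy₁y₂.ne]
    exact ⟨le_rfl, hy₁y₂.le⟩
  have hay₁ : a y₁ = M :=
    le_antisymm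
      (le_of_tendsto hcwy₁ (eventually_mem_nhdsWithin.mono fun z hz => (hlt z hz).le))
      hy₁mem.2
  refine ⟨y₁, y₂, hx₂y₁, hy₁y₂, hy₂le, ?_, ?_, ?_, ?_, ?_⟩
  · -- Ioo y₁ y₂ ⊆ D
    intro z hz
    rw [hD]
    refine ⟨⟨lt_of_lt_of_le ht'x₂ (hx₂y₁.trans hz.1.le), lt_of_lt_of_le hz.2 hy₂le⟩, ?_, ?_⟩
    · exact hgt z ⟨hx₂y₁.trans hz.1.le, hz.2⟩
    · exact hlt z ⟨hz.1, hz.2.le⟩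
  · rw [hD]; intro h; exact absurd h.2.2 (by rw [hay₁]; exact lt_irrefl M)
  · rw [hD]; intro h; exact absurd h.2.1 (by rw [hay₂]; exact lt_irrefl m)
  · -- Tendsto a (𝓝[>] y₁) (𝓝 M)
    rw [← hay₁]
    refine (ha_cont y₁ hy₁Icc).tendsto.mono_left (nhdsWithin_le_iff.mpr ?_)
    exact mem_of_superset (Ioo_mem_nhdsGT_of_mem ⟨le_rfl, hy₁y₂⟩)
      (fun z hz => ⟨ht'x₂.le.trans (hx₂y₁.trans hz.1.le), hz.2.le.trans hy₂le⟩)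
  · -- Tendsto a (𝓝[<] y₂) (𝓝 m)
    rw [← hay₂]
    refine (ha_cont y₂ hy₂Icc).tendsto.mono_left (nhdsWithin_le_iff.mpr ?_)
    exact mem_of_superset (Ioo_mem_nhdsLT_of_mem ⟨hy₁y₂, le_rfl⟩)
      (fun z hz => ⟨ht'x₂.le.trans (hx₂y₁.trans hz.1.le), hz.2.le.trans hy₂le⟩)
end

section
/- Suppose I is a connected component of D such that a(α) → M both as α → inf I and as α → sup I (an interval of type I_{0,0}). Then there exists a connected component J₁ of D with a(α) → m as α → inf J₁ and a(α) → M as α → sup J₁ (type I_{∞,0}); in particular, there also exists a connected component J₂ of D with a(α) → M as α → inf J₂ and a(α) → m as α → sup J₂ (type I_{0,∞}) such that sup J₁ ≤ inf J₂. -/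
open Set Filter Topology

private lemma nhds_gt_le_Icc {p q y : ℝ} (hy : p ≤ y) (hyq : y < q) :
    𝓝[>] y ≤ 𝓝[Icc p q] y := by
  rw [nhdsWithin_le_iff]
  exact mem_of_superset (Ioo_mem_nhdsGT_of_mem ⟨le_refl y, hyq⟩)
    (fun x hx => ⟨hy.trans hx.1.le, hx.2.le⟩)

private lemma nhds_lt_le_Icc {p q y : ℝ} (hy : p < y) (hyq : y ≤ q) :
    𝓝[<] y ≤ 𝓝[Icc p q] y := by
  rw [nhdsWithin_le_iff]
  exact mem_of_superset (Ioo_mem_nhdsLT_of_mem ⟨hy, le_refl y⟩)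
    (fun x hx => ⟨hx.1.le, hx.2.le.trans hyq⟩)

private lemma tendsto_const_sub_gt (c z : ℝ) :
    Tendsto (fun s => c - s) (𝓝[>] z) (𝓝[<] (c - z)) := by
  apply tendsto_nhdsWithin_of_tendsto_nhds_of_eventually_within
  · exact (tendsto_const_nhds.sub tendsto_id).mono_left nhdsWithin_le_nhds
  · filter_upwards [self_mem_nhdsWithin] with x hx
    exact sub_lt_sub_left hx c

private lemma tendsto_const_sub_lt (c z : ℝ) :
    Tendsto (fun s => c - s) (𝓝[<] z) (𝓝[>] (c - z)) := by
  apply tendsto_nhdsWithin_of_tendsto_nhds_of_eventually_within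
  · exact (tendsto_const_nhds.sub tendsto_id).mono_left nhdsWithin_le_nhds
  · filter_upwards [self_mem_nhdsWithin] with x hx
    exact sub_lt_sub_left hx c

private lemma core {p q m M : ℝ} {a : ℝ → ℝ} (hpq : p < q)
    (hc : ContinuousOn a (Icc p q)) (hap : a p ≤ m) (haq : a q = M) (hmM : m < M) :
    ∃ y₁ y₂ : ℝ, p ≤ y₁ ∧ y₁ < y₂ ∧ y₂ ≤ q ∧ a y₁ = m ∧ a y₂ = M ∧
      (∀ α ∈ Ioo y₁ y₂, m < a α ∧ a α < M) ∧
      Tendsto a (𝓝[>] y₁) (𝓝 m) ∧ Tendsto a (𝓝[<] y₂) (𝓝 M) := by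
  set S : Set ℝ := Icc p q ∩ a ⁻¹' (Iic m) with hSdef
  have hSclosed : IsClosed S := hc.preimage_isClosed_of_isClosed isClosed_Icc isClosed_Iic
  have hScpt : IsCompact S := isCompact_Icc.of_isClosed_subset hSclosed inter_subset_left
  have hSne : S.Nonempty := ⟨p, ⟨le_refl p, hpq.le⟩, hap⟩
  have hy₁S : sSup S ∈ S := hScpt.sSup_mem hSne
  set y₁ := sSup S with hy₁def
  have hy₁m : a y₁ ≤ m := hy₁S.2
  have hy₁Icc : y₁ ∈ Icc p q := hy₁S.1
  have hgt : ∀ α, y₁ < α → α ≤ q → m < a α := by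
    intro α h1 h2
    by_contra h
    push_neg at h
    have hmem : α ∈ S := ⟨⟨hy₁Icc.1.trans h1.le, h2⟩, h⟩
    exact absurd (le_csSup hScpt.bddAbove hmem) (not_le.2 h1)
  have hy₁q : y₁ < q := lt_of_le_of_ne hy₁Icc.2 (fun h => by
    rw [h, haq] at hy₁m; linarith)
  -- second set
  set T : Set ℝ := Icc y₁ q ∩ a ⁻¹' (Ici M) with hTdef
  have hTclosed : IsClosed T :=
    (hc.mono (Icc_subset_Icc hy₁Icc.1 le_rfl)).preimage_isClosed_of_isClosed
      isClosed_Icc isClosed_Ici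
  have hTcpt : IsCompact T := isCompact_Icc.of_isClosed_subset hTclosed inter_subset_left
  have hTne : T.Nonempty := ⟨q, ⟨hy₁q.le, le_rfl⟩, haq.ge⟩
  have hy₂T : sInf T ∈ T := hTcpt.sInf_mem hTne
  set y₂ := sInf T with hy₂def
  have hy₂M : M ≤ a y₂ := hy₂T.2
  have hy₂Icc : y₂ ∈ Icc y₁ q := hy₂T.1
  have hy12 : y₁ < y₂ := lt_of_le_of_ne hy₂Icc.1 (fun h => by
    rw [← h] at hy₂M; linarith)
  have hlt : ∀ α, y₁ ≤ α → α < y₂ → a α < M := by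
    intro α h1 h2
    by_contra h
    push_neg at h
    have hmem : α ∈ T := ⟨⟨h1, h2.le.trans hy₂Icc.2⟩, h⟩
    exact absurd (csInf_le hTcpt.bddBelow hmem) (not_le.2 h2)
  have hmid : ∀ α ∈ Ioo y₁ y₂, m < a α ∧ a α < M := fun α hα =>
    ⟨hgt α hα.1 (hα.2.le.trans hy₂Icc.2), hlt α hα.1.le hα.2⟩
  -- limits
  have hcy₁ : Tendsto a (𝓝[>] y₁) (𝓝 (a y₁)) :=
    (hc y₁ hy₁Icc).mono_left (nhds_gt_le_Icc hy₁Icc.1 hy₁q)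
  have hcy₂ : Tendsto a (𝓝[<] y₂) (𝓝 (a y₂)) :=
    (hc y₂ ⟨hy₁Icc.1.trans hy₂Icc.1, hy₂Icc.2⟩).mono_left
      (nhds_lt_le_Icc (hy₁Icc.1.trans_lt hy12) hy₂Icc.2)
  have hmemIoo₁ : ∀ᶠ x in 𝓝[>] y₁, x ∈ Ioo y₁ y₂ :=
    Ioo_mem_nhdsGT_of_mem ⟨le_refl y₁, hy12⟩
  have hmemIoo₂ : ∀ᶠ x in 𝓝[<] y₂, x ∈ Ioo y₁ y₂ :=
    Ioo_mem_nhdsLT_of_mem ⟨hy12, le_refl y₂⟩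
  have hay₁ : a y₁ = m := le_antisymm hy₁m
    (ge_of_tendsto hcy₁ (hmemIoo₁.mono fun x hx => (hmid x hx).1.le))
  have hay₂ : a y₂ = M := le_antisymm
    (le_of_tendsto hcy₂ (hmemIoo₂.mono fun x hx => (hmid x hx).2.le)) hy₂M
  exact ⟨y₁, y₂, hy₁Icc.1, hy12, hy₂Icc.2, hay₁, hay₂, hmid,
    hay₁ ▸ hcy₁, hay₂ ▸ hcy₂⟩

/- If (x₁,x₂) is a connected component of D = {α ∈ (t',t'') : m < a(α) < M} of type I_{0,0}
   (a → M at both endpoints), then there is a component (y₁,y₂) of type I_{∞,0}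
   (a → m at the left endpoint, a → M at the right endpoint), and in particular also a
   component (z₁,z₂) of type I_{0,∞} with y₂ ≤ z₁. -/
theorem stmt6 (t' t'' m M : ℝ) (a : ℝ → ℝ)
    (ht' : 0 ≤ t') (ht : t' < t'')
    (ha_cont : ContinuousOn a (Icc t' t''))
    (ha_t' : a t' = 0) (ha_t'' : a t'' = 0)
    (ha_pos : ∀ α ∈ Ioo t' t'', 0 < a α)
    (hm : 0 ≤ m) (hmM : m < M)
    (D : Set ℝ) (hD : D = {α : ℝ | α ∈ Ioo t' t'' ∧ m < a α ∧ a α < M})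
    (x₁ x₂ : ℝ) (hx₁ : t' ≤ x₁) (hx : x₁ < x₂) (hx₂ : x₂ ≤ t'')
    (hsub : Ioo x₁ x₂ ⊆ D) (hx₁D : x₁ ∉ D) (hx₂D : x₂ ∉ D)
    (hlim₁ : Tendsto a (𝓝[>] x₁) (𝓝 M))
    (hlim₂ : Tendsto a (𝓝[<] x₂) (𝓝 M)) :
    ∃ y₁ y₂ z₁ z₂ : ℝ,
      t' ≤ y₁ ∧ y₁ < y₂ ∧
      Ioo y₁ y₂ ⊆ D ∧ y₁ ∉ D ∧ y₂ ∉ D ∧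
      Tendsto a (𝓝[>] y₁) (𝓝 m) ∧ Tendsto a (𝓝[<] y₂) (𝓝 M) ∧
      y₂ ≤ z₁ ∧ z₁ < z₂ ∧ z₂ ≤ t'' ∧
      Ioo z₁ z₂ ⊆ D ∧ z₁ ∉ D ∧ z₂ ∉ D ∧
      Tendsto a (𝓝[>] z₁) (𝓝 M) ∧ Tendsto a (𝓝[<] z₂) (𝓝 m) := by
  have hx₁t'' : x₁ < t'' := hx.trans_le hx₂
  have ht'x₂ : t' < x₂ := hx₁.trans_lt hx
  -- a x₁ = M
  have hax₁ : a x₁ = M := by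
    have hcw : Tendsto a (𝓝[>] x₁) (𝓝 (a x₁)) :=
      (ha_cont x₁ ⟨hx₁, hx₁t''.le⟩).mono_left (nhds_gt_le_Icc hx₁ hx₁t'')
    exact tendsto_nhds_unique hcw hlim₁
  have hax₂ : a x₂ = M := by
    have hcw : Tendsto a (𝓝[<] x₂) (𝓝 (a x₂)) :=
      (ha_cont x₂ ⟨ht'x₂.le, hx₂⟩).mono_left (nhds_lt_le_Icc ht'x₂ hx₂)
    exact tendsto_nhds_unique hcw hlim₂
  have ht'x₁ : t' < x₁ := lt_of_le_of_ne hx₁ (fun h => by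
    rw [← h, ha_t'] at hax₁; linarith)
  have hx₂t'' : x₂ < t'' := lt_of_le_of_ne hx₂ (fun h => by
    rw [h, ha_t''] at hax₂; linarith)
  -- first component, on [t', x₁]
  obtain ⟨y₁, y₂, hy₁p, hy12, hy₂q, hay₁, hay₂, hmidy, hty₁, hty₂⟩ :=
    core ht'x₁ (ha_cont.mono (Icc_subset_Icc le_rfl hx₁t''.le))
      (ha_t' ▸ hm) hax₁ hmM
  -- second component, via reflection, on [x₂, t'']
  set c := x₂ + t'' with hc
  have hbc : ContinuousOn (fun s => a (c - s)) (Icc x₂ t'') := by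
    apply ha_cont.comp (continuous_const.sub continuous_id).continuousOn
    intro s hs
    refine ⟨?_, ?_⟩ <;> simp only [Pi.sub_apply, id_eq, hc] <;> linarith [hs.1, hs.2, ht'x₂]
  have hbx₂ : a (c - x₂) ≤ m := by
    have : c - x₂ = t'' := by ring
    rw [this, ha_t'']; exact hm
  have hbt'' : a (c - t'') = M := by
    have : c - t'' = x₂ := by ring
    rw [this, hax₂]
  obtain ⟨w₁, w₂, hw₁p, hw12, hw₂q, haw₁, haw₂, hmidw, htw₁, htw₂⟩ :=
    core hx₂t'' hbc hbx₂ hbt'' hmM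
  set z₁ := c - w₂ with hz₁
  set z₂ := c - w₁ with hz₂
  have hz₁x₂ : x₂ ≤ z₁ := by simp only [hz₁, hc]; linarith
  have hz12 : z₁ < z₂ := by simp only [hz₁, hz₂]; linarith
  have hz₂t'' : z₂ ≤ t'' := by simp only [hz₂, hc]; linarith [hw₁p]
  have haz₁ : a z₁ = M := haw₂
  have haz₂ : a z₂ = m := haw₁
  refine ⟨y₁, y₂, z₁, z₂, hy₁p, hy12, ?_, ?_, ?_, hty₁, hty₂,
    le_trans hy₂q (hx.le.trans hz₁x₂), hz12, hz₂t'', ?_, ?_, ?_, ?_, ?_⟩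
  · -- Ioo y₁ y₂ ⊆ D
    intro α hα
    rw [hD]
    exact ⟨⟨hy₁p.trans_lt hα.1, (hα.2.trans_le hy₂q).trans hx₁t''⟩, hmidy α hα⟩
  · rw [hD]; intro h; simp only [mem_setOf_eq] at h; rw [hay₁] at h; exact lt_irrefl m h.2.1
  · rw [hD]; intro h; simp only [mem_setOf_eq] at h; rw [hay₂] at h; exact lt_irrefl M h.2.2
  · -- Ioo z₁ z₂ ⊆ D
    intro α hα
    rw [hD]
    have h1 : w₁ < c - α := by simp only [hz₂] at hα; linarith [hα.2]
    have h2 : c - α < w₂ := by simp only [hz₁] at hα; linarith [hα.1]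
    have hmw := hmidw (c - α) ⟨h1, h2⟩
    have hcc : c - (c - α) = α := by ring
    rw [hcc] at hmw
    exact ⟨⟨ht'x₂.trans_le (hz₁x₂.trans hα.1.le), hα.2.trans_le hz₂t''⟩, hmw⟩
  · rw [hD]; intro h; simp only [mem_setOf_eq] at h; rw [haz₁] at h; exact lt_irrefl M h.2.2
  · rw [hD]; intro h; simp only [mem_setOf_eq] at h; rw [haz₂] at h; exact lt_irrefl m h.2.1
  · -- Tendsto a (𝓝[>] z₁) (𝓝 M)
    have hmap : Tendsto (fun s => c - s) (𝓝[>] z₁) (𝓝[<] w₂) := by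
      have : c - z₁ = w₂ := by simp only [hz₁]; ring
      exact this ▸ tendsto_const_sub_gt c z₁
    have := htw₂.comp hmap
    have heq : ((fun s => a (c - s)) ∘ fun s => c - s) = a := by
      funext s; simp only [Function.comp]; congr 1; ring
    rwa [heq] at this
  · -- Tendsto a (𝓝[<] z₂) (𝓝 m)
    have hmap : Tendsto (fun s => c - s) (𝓝[<] z₂) (𝓝[>] w₁) := by
      have : c - z₂ = w₁ := by simp only [hz₂]; ring
      exact this ▸ tendsto_const_sub_lt c z₂
    have := htw₁.comp hmap
    have heq : ((fun s => a (c - s)) ∘ fun s => c - s) = a := by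
      funext s; simp only [Function.comp]; congr 1; ring
    rwa [heq] at this
end

section
/- Assume 0 < λ < A·s₊ (so that D is nonempty). Then every connected component I of D satisfies a(inf I) = a(sup I) = λ/s₊ (type I_{∞,∞}) if and only if A < λ/s₋ (with the conventions λ/∞ := 0, λ/0 := ∞ and A·s₊ := ∞ when s₊ = ∞). -/
open Set Filter Topology

/-- "x = λ/s₊" with the convention λ/∞ := 0 (sHi ∈ EReal). -/
def EqDivTop (lam x : ℝ) (sHi : EReal) : Prop :=
  (sHi = ⊤ ∧ x = 0) ∨ (∃ r : ℝ, sHi = (r : EReal) ∧ x = lam / r)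

/-- First hitting point of level `c` from the left. -/
lemma hit_first {a : ℝ → ℝ} {s e c : ℝ} (hse : s ≤ e)
    (hc : ContinuousOn a (Icc s e)) (h0 : a s < c) (h1 : c ≤ a e) :
    ∃ x, x ∈ Ioc s e ∧ a x = c ∧ ∀ α ∈ Ico s x, a α < c := by
  set S := Icc s e ∩ a ⁻¹' Ici c with hS
  have hSclosed : IsClosed S :=
    hc.preimage_isClosed_of_isClosed isClosed_Icc isClosed_Ici
  have hSne : S.Nonempty := ⟨e, ⟨hse, le_rfl⟩, h1⟩
  have hSbdd : BddBelow S := ⟨s, fun y hy => hy.1.1⟩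
  set x := sInf S with hx
  have hxS : x ∈ S := hSclosed.csInf_mem hSne hSbdd
  have hlt : ∀ α ∈ Ico s x, a α < c := by
    intro α hα
    by_contra h
    push_neg at h
    have hmem : α ∈ S := ⟨⟨hα.1, hα.2.le.trans hxS.1.2⟩, h⟩
    exact absurd (csInf_le hSbdd hmem) (not_le.mpr hα.2)
  have hxs : s < x := by
    rcases eq_or_lt_of_le hxS.1.1 with h | h
    · have h2 := hxS.2
      rw [← h] at h2
      exact absurd h2 (not_le.mpr h0)
    · exact h
  have hle : a x ≤ c := by
    have hcl : IsClosed (Icc s e ∩ a ⁻¹' Iic c) :=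
      hc.preimage_isClosed_of_isClosed isClosed_Icc isClosed_Iic
    have hsub : Ico s x ⊆ Icc s e ∩ a ⁻¹' Iic c := fun α hα =>
      ⟨⟨hα.1, hα.2.le.trans hxS.1.2⟩, (hlt α hα).le⟩
    have hmem : x ∈ closure (Ico s x) := by
      rw [closure_Ico (ne_of_lt hxs)]
      exact ⟨hxs.le, le_rfl⟩
    exact (hcl.closure_subset_iff.mpr hsub hmem).2
  exact ⟨x, ⟨hxs, hxS.1.2⟩, le_antisymm hle hxS.2, hlt⟩

/-- Last point where `a ≤ b` before `e`. -/
lemma hit_last {a : ℝ → ℝ} {s e b : ℝ} (hse : s ≤ e)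
    (hc : ContinuousOn a (Icc s e)) (h0 : a s ≤ b) (h1 : b < a e) :
    ∃ x, x ∈ Ico s e ∧ a x = b ∧ ∀ α ∈ Ioc x e, b < a α := by
  set S := Icc s e ∩ a ⁻¹' Iic b with hS
  have hSclosed : IsClosed S :=
    hc.preimage_isClosed_of_isClosed isClosed_Icc isClosed_Iic
  have hSne : S.Nonempty := ⟨s, ⟨le_rfl, hse⟩, h0⟩
  have hSbdd : BddAbove S := ⟨e, fun y hy => hy.1.2⟩
  set x := sSup S with hx
  have hxS : x ∈ S := hSclosed.csSup_mem hSne hSbdd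
  have hgt : ∀ α ∈ Ioc x e, b < a α := by
    intro α hα
    by_contra h
    push_neg at h
    have hmem : α ∈ S := ⟨⟨hxS.1.1.trans hα.1.le, hα.2⟩, h⟩
    exact absurd (le_csSup hSbdd hmem) (not_le.mpr hα.1)
  have hxe : x < e := by
    rcases eq_or_lt_of_le hxS.1.2 with h | h
    · have h2 := hxS.2
      rw [h] at h2
      exact absurd h2 (not_le.mpr h1)
    · exact h
  have hge : b ≤ a x := by
    have hcl : IsClosed (Icc s e ∩ a ⁻¹' Ici b) :=
      hc.preimage_isClosed_of_isClosed isClosed_Icc isClosed_Ici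
    have hsub : Ioc x e ⊆ Icc s e ∩ a ⁻¹' Ici b := fun α hα =>
      ⟨⟨hxS.1.1.trans hα.1.le, hα.2⟩, (hgt α hα).le⟩
    have hmem : x ∈ closure (Ioc x e) := by
      rw [closure_Ioc (ne_of_lt hxe)]
      exact ⟨le_rfl, hxe.le⟩
    exact (hcl.closure_subset_iff.mpr hsub hmem).2
  exact ⟨x, ⟨hxS.1.1, hxe⟩, le_antisymm hxS.2 hge, hgt⟩

/-- From a lower bound on an open interval, get the bound at the endpoints. -/
lemma ge_of_Ioo {a : ℝ → ℝ} {s e x₁ x₂ v : ℝ} (h12 : x₁ < x₂)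
    (hsub : Ioo x₁ x₂ ⊆ Icc s e) (hc : ContinuousOn a (Icc s e))
    (hv : ∀ α ∈ Ioo x₁ x₂, v ≤ a α) : v ≤ a x₁ ∧ v ≤ a x₂ := by
  have hcl : IsClosed (Icc s e ∩ a ⁻¹' Ici v) :=
    hc.preimage_isClosed_of_isClosed isClosed_Icc isClosed_Ici
  have hsub' : Ioo x₁ x₂ ⊆ Icc s e ∩ a ⁻¹' Ici v := fun α hα =>
    ⟨hsub hα, hv α hα⟩
  have hclsub := hcl.closure_subset_iff.mpr hsub'
  rw [closure_Ioo (ne_of_lt h12)] at hclsub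
  exact ⟨(hclsub ⟨le_rfl, h12.le⟩).2, (hclsub ⟨h12.le, le_rfl⟩).2⟩

lemma key_lemma {a : ℝ → ℝ} {t' t'' A sLo lam : ℝ}
    (hA : IsGreatest (a '' Icc t' t'') A)
    (ha_pos : ∀ α ∈ Ioo t' t'', 0 < a α) (hsLo : 0 ≤ sLo) (hlam : 0 < lam)
    (hyp : sLo = 0 ∨ A < lam / sLo) : ∀ α ∈ Ioo t' t'', sLo < lam / a α := by
  intro α hα
  have hpos := ha_pos α hα
  rcases hyp with h | h
  · rw [h]; exact div_pos hlam hpos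
  · rcases eq_or_lt_of_le hsLo with h0 | h0
    · rw [← h0]; exact div_pos hlam hpos
    · have haA : a α ≤ A := hA.2 ⟨α, Ioo_subset_Icc_self hα, rfl⟩
      rw [lt_div_iff₀ hpos]
      have h2 : a α < lam / sLo := lt_of_le_of_lt haA h
      have h3 := (lt_div_iff₀ h0).mp h2
      nlinarith

/- Assume 0 < λ < A·s₊. Every connected component (x₁,x₂) of D satisfies
   a(x₁) = a(x₂) = λ/s₊ (type I_{∞,∞}) if and only if A < λ/s₋
   (conventions: λ/∞ := 0, λ/0 := ∞, A·s₊ := ∞ when s₊ = ∞). -/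
theorem stmt7 (t' t'' A sLo : ℝ) (sHi : EReal) (a : ℝ → ℝ)
    (ht' : 0 ≤ t') (ht : t' < t'')
    (ha_cont : ContinuousOn a (Icc t' t''))
    (ha_t' : a t' = 0) (ha_t'' : a t'' = 0)
    (ha_pos : ∀ α ∈ Ioo t' t'', 0 < a α)
    (hA : IsGreatest (a '' Icc t' t'') A)
    (hsLo : 0 ≤ sLo) (hs : (sLo : EReal) < sHi)
    (lam : ℝ) (hlam : 0 < lam) (hlamA : (lam : EReal) < (A : EReal) * sHi)
    (D : Set ℝ)
    (hD : D = {α : ℝ | α ∈ Ioo t' t'' ∧ sLo < lam / a α ∧ ((lam / a α : ℝ) : EReal) < sHi}) :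
    (∀ x₁ x₂ : ℝ, t' ≤ x₁ → x₁ < x₂ → x₂ ≤ t'' →
        Ioo x₁ x₂ ⊆ D → x₁ ∉ D → x₂ ∉ D →
        EqDivTop lam (a x₁) sHi ∧ EqDivTop lam (a x₂) sHi)
      ↔ (sLo = 0 ∨ A < lam / sLo) := by
  subst hD
  have hmid : (t' + t'') / 2 ∈ Ioo t' t'' := ⟨by linarith, by linarith⟩
  have hA0 : 0 < A :=
    lt_of_lt_of_le (ha_pos _ hmid) (hA.2 ⟨_, Ioo_subset_Icc_self hmid, rfl⟩)
  induction sHi using EReal.rec with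
  | bot => exact absurd hs not_lt_bot
  | top =>
    constructor
    · intro H
      by_contra hcon
      push_neg at hcon
      obtain ⟨hsLo0, hAle⟩ := hcon
      have hsLopos : 0 < sLo := hsLo.lt_of_ne (Ne.symm hsLo0)
      have hc0 : 0 < lam / sLo := div_pos hlam hsLopos
      obtain ⟨αs, hαsmem, hαsA⟩ := hA.1
      have hαs2 : αs < t'' := lt_of_le_of_ne hαsmem.2 (by
        intro h; rw [h, ha_t''] at hαsA; linarith)
      obtain ⟨x₂, hx₂mem, hax₂, hlt2⟩ :=
        hit_first hαsmem.1 (ha_cont.mono (Icc_subset_Icc le_rfl hαsmem.2))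
          (by rw [ha_t']; exact hc0) (by rw [hαsA]; exact hAle)
      obtain ⟨x₁, hx₁mem, hax₁, hgt1⟩ :=
        hit_last (le_of_lt hx₂mem.1)
          (ha_cont.mono (Icc_subset_Icc le_rfl (hx₂mem.2.trans hαsmem.2)))
          (le_of_eq ha_t') (by rw [hax₂]; exact hc0)
      have hx₂t : x₂ < t'' := lt_of_le_of_lt hx₂mem.2 hαs2
      have hsubD : Ioo x₁ x₂ ⊆
          {α : ℝ | α ∈ Ioo t' t'' ∧ sLo < lam / a α ∧
            ((lam / a α : ℝ) : EReal) < ⊤} := by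
        intro α hα
        have hαIoo : α ∈ Ioo t' t'' :=
          ⟨lt_of_le_of_lt hx₁mem.1 hα.1, hα.2.trans hx₂t⟩
        have hpos := ha_pos α hαIoo
        have hαc : a α < lam / sLo := by
          have := hlt2 α ⟨hx₁mem.1.trans hα.1.le, hα.2⟩
          exact this
        refine ⟨hαIoo, ?_, EReal.coe_lt_top _⟩
        rw [lt_div_iff₀ hpos]
        have h3 := (lt_div_iff₀ hsLopos).mp hαc
        nlinarith
      have hx₁D : x₁ ∉ {α : ℝ | α ∈ Ioo t' t'' ∧ sLo < lam / a α ∧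
          ((lam / a α : ℝ) : EReal) < ⊤} := by
        intro h
        have := ha_pos x₁ h.1
        rw [hax₁] at this
        exact lt_irrefl 0 this
      have hx₂D : x₂ ∉ {α : ℝ | α ∈ Ioo t' t'' ∧ sLo < lam / a α ∧
          ((lam / a α : ℝ) : EReal) < ⊤} := by
        intro h
        have h2 := h.2.1
        rw [hax₂] at h2
        have hdd : lam / (lam / sLo) = sLo := by
          field_simp
        rw [hdd] at h2
        exact lt_irrefl sLo h2
      obtain ⟨-, h2⟩ := H x₁ x₂ hx₁mem.1 hx₁mem.2 hx₂t.le hsubD hx₁D hx₂D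
      rcases h2 with ⟨-, h0⟩ | ⟨r, hr, -⟩
      · rw [hax₂] at h0; linarith
      · exact EReal.coe_ne_top r hr.symm
    · intro hyp x₁ x₂ h1 h12 h2 hsub hx1 hx2
      have key := key_lemma hA ha_pos hsLo hlam hyp
      have hx1' : x₁ = t' := by
        by_contra h
        have ht1 : t' < x₁ := lt_of_le_of_ne h1 (Ne.symm h)
        have hIoo : x₁ ∈ Ioo t' t'' := ⟨ht1, lt_of_lt_of_le h12 h2⟩
        exact hx1 ⟨hIoo, key x₁ hIoo, EReal.coe_lt_top _⟩
      have hx2' : x₂ = t'' := by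
        by_contra h
        have ht2 : x₂ < t'' := lt_of_le_of_ne h2 h
        have hIoo : x₂ ∈ Ioo t' t'' := ⟨lt_of_le_of_lt h1 h12, ht2⟩
        exact hx2 ⟨hIoo, key x₂ hIoo, EReal.coe_lt_top _⟩
      exact ⟨Or.inl ⟨rfl, by rw [hx1', ha_t']⟩, Or.inl ⟨rfl, by rw [hx2', ha_t'']⟩⟩
  | coe r =>
    have hsr : sLo < r := by exact_mod_cast hs
    have hr0 : 0 < r := lt_of_le_of_lt hsLo hsr
    have hb0 : 0 < lam / r := div_pos hlam hr0
    constructor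
    · intro H
      by_contra hcon
      push_neg at hcon
      obtain ⟨hsLo0, hAle⟩ := hcon
      have hsLopos : 0 < sLo := hsLo.lt_of_ne (Ne.symm hsLo0)
      have hc0 : 0 < lam / sLo := div_pos hlam hsLopos
      have hbc : lam / r < lam / sLo := div_lt_div_of_pos_left hlam hsLopos hsr
      obtain ⟨αs, hαsmem, hαsA⟩ := hA.1
      have hαs2 : αs < t'' := lt_of_le_of_ne hαsmem.2 (by
        intro h; rw [h, ha_t''] at hαsA; linarith)
      obtain ⟨x₂, hx₂mem, hax₂, hlt2⟩ :=
        hit_first hαsmem.1 (ha_cont.mono (Icc_subset_Icc le_rfl hαsmem.2))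
          (by rw [ha_t']; exact hc0) (by rw [hαsA]; exact hAle)
      obtain ⟨x₁, hx₁mem, hax₁, hgt1⟩ :=
        hit_last (b := lam / r) (le_of_lt hx₂mem.1)
          (ha_cont.mono (Icc_subset_Icc le_rfl (hx₂mem.2.trans hαsmem.2)))
          (by rw [ha_t']; exact hb0.le) (by rw [hax₂]; exact hbc)
      have hx₂t : x₂ < t'' := lt_of_le_of_lt hx₂mem.2 hαs2
      have hsubD : Ioo x₁ x₂ ⊆
          {α : ℝ | α ∈ Ioo t' t'' ∧ sLo < lam / a α ∧
            ((lam / a α : ℝ) : EReal) < (r : EReal)} := by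
        intro α hα
        have hαIoo : α ∈ Ioo t' t'' :=
          ⟨lt_of_le_of_lt hx₁mem.1 hα.1, hα.2.trans hx₂t⟩
        have hpos := ha_pos α hαIoo
        have hαc : a α < lam / sLo := hlt2 α ⟨hx₁mem.1.trans hα.1.le, hα.2⟩
        have hαb : lam / r < a α := hgt1 α ⟨hα.1, hα.2.le⟩
        refine ⟨hαIoo, ?_, ?_⟩
        · rw [lt_div_iff₀ hpos]
          have h3 := (lt_div_iff₀ hsLopos).mp hαc
          nlinarith
        · rw [EReal.coe_lt_coe_iff, div_lt_iff₀ hpos]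
          have h3 := (div_lt_iff₀ hr0).mp hαb
          nlinarith
      have hx₁D : x₁ ∉ {α : ℝ | α ∈ Ioo t' t'' ∧ sLo < lam / a α ∧
          ((lam / a α : ℝ) : EReal) < (r : EReal)} := by
        intro h
        have hlt := h.2.2
        rw [EReal.coe_lt_coe_iff, hax₁] at hlt
        have hdd : lam / (lam / r) = r := by field_simp
        rw [hdd] at hlt
        exact lt_irrefl r hlt
      have hx₂D : x₂ ∉ {α : ℝ | α ∈ Ioo t' t'' ∧ sLo < lam / a α ∧
          ((lam / a α : ℝ) : EReal) < (r : EReal)} := by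
        intro h
        have h2 := h.2.1
        rw [hax₂] at h2
        have hdd : lam / (lam / sLo) = sLo := by field_simp
        rw [hdd] at h2
        exact lt_irrefl sLo h2
      obtain ⟨-, h2⟩ := H x₁ x₂ hx₁mem.1 hx₁mem.2 hx₂t.le hsubD hx₁D hx₂D
      rcases h2 with ⟨htop, -⟩ | ⟨r', hr', he⟩
      · exact EReal.coe_ne_top r htop
      · have hrr : r = r' := by exact_mod_cast hr'
        rw [← hrr] at he
        rw [hax₂] at he
        linarith
    · intro hyp x₁ x₂ h1 h12 h2 hsub hx1 hx2
      have key := key_lemma hA ha_pos hsLo hlam hyp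
      have hge : lam / r ≤ a x₁ ∧ lam / r ≤ a x₂ := by
        refine ge_of_Ioo h12 (fun α hα =>
          ⟨h1.trans hα.1.le, hα.2.le.trans h2⟩) ha_cont (fun α hα => ?_)
        obtain ⟨hαIoo, -, hαHi⟩ := hsub hα
        have hpos := ha_pos α hαIoo
        rw [EReal.coe_lt_coe_iff] at hαHi
        rw [div_le_iff₀ hr0]
        have h3 := (div_lt_iff₀ hpos).mp hαHi
        nlinarith
      constructor
      · rcases eq_or_lt_of_le hge.1 with h | h
        · exact Or.inr ⟨r, rfl, h.symm⟩
        · exfalso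
          have hpos : 0 < a x₁ := hb0.trans h
          have ht1 : t' < x₁ := by
            rcases eq_or_lt_of_le h1 with h' | h'
            · rw [← h', ha_t'] at hpos; linarith
            · exact h'
          have hIoo : x₁ ∈ Ioo t' t'' := ⟨ht1, lt_of_lt_of_le h12 h2⟩
          refine hx1 ⟨hIoo, key x₁ hIoo, ?_⟩
          rw [EReal.coe_lt_coe_iff, div_lt_iff₀ hpos]
          have h3 := (div_lt_iff₀ hr0).mp h
          nlinarith
      · rcases eq_or_lt_of_le hge.2 with h | h
        · exact Or.inr ⟨r, rfl, h.symm⟩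
        · exfalso
          have hpos : 0 < a x₂ := hb0.trans h
          have ht2 : x₂ < t'' := by
            rcases eq_or_lt_of_le h2 with h' | h'
            · rw [h', ha_t''] at hpos; linarith
            · exact h'
          have hIoo : x₂ ∈ Ioo t' t'' := ⟨lt_of_le_of_lt h1 h12, ht2⟩
          refine hx2 ⟨hIoo, key x₂ hIoo, ?_⟩
          rw [EReal.coe_lt_coe_iff, div_lt_iff₀ hpos]
          have h3 := (div_lt_iff₀ hr0).mp h
          nlinarith
end

section
/- For every λ ∈ (0, A·s₊) the infimum c(λ) is attained at some α_λ ∈ D̃_λ. Moreover the function c is continuous on (0, A·s₊), satisfies limsup_{λ→0⁺} c(λ) ≤ −t'' < 0, and c(λ) → +∞ as λ → (A·s₊)⁻ (when A·s₊ = ∞ this means c(λ) → ∞ as λ → ∞). -/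
open Set Filter Topology

lemma aux_div_lt {A x : ℝ} {sHi : EReal} (hA : 0 < A) :
    ((x:EReal) < (A:EReal)*sHi ↔ ((x/A:ℝ):EReal) < sHi) := by
  induction sHi using EReal.rec with
  | bot =>
    rw [EReal.mul_bot_of_pos (by exact_mod_cast hA)]
    simp
  | coe b =>
    rw [← EReal.coe_mul, EReal.coe_lt_coe_iff, EReal.coe_lt_coe_iff, div_lt_iff₀ hA,
      mul_comm]
  | top =>
    rw [EReal.mul_top_of_pos (by exact_mod_cast hA)]
    simp [lt_top_iff_ne_top]

lemma aux_Q_big {sLo : ℝ} {sHi : EReal} {Q : ℝ → ℝ} (hs : (sLo:EReal) < sHi)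
    (hQ_top : Tendsto Q (comap (fun s:ℝ => (s:EReal)) (𝓝[<] sHi)) atTop)
    (C : ℝ) (z0 : EReal) (hz0 : z0 < sHi) :
    ∃ s1 : ℝ, z0 < (s1:EReal) ∧ sLo < s1 ∧ (s1:EReal) < sHi ∧
      ∀ s : ℝ, s1 < s → (s:EReal) < sHi → C < Q s := by
  have hev : {s : ℝ | C < Q s} ∈ comap (fun s:ℝ => (s:EReal)) (𝓝[<] sHi) :=
    hQ_top.eventually (eventually_gt_atTop C)
  obtain ⟨S, hS, hSsub⟩ := mem_comap.mp hev
  have hl' : max z0 (sLo:EReal) < sHi := max_lt hz0 hs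
  obtain ⟨z, hzmem, hzsub⟩ := (mem_nhdsLT_iff_exists_Ioo_subset' hl').mp hS
  have hz' : max z (max z0 (sLo:EReal)) < sHi := max_lt hzmem hl'
  obtain ⟨s1, hzs1, hs1⟩ := EReal.exists_between_coe_real hz'
  refine ⟨s1, lt_of_le_of_lt (le_trans (le_max_left _ _) (le_max_right _ _)) hzs1,
    ?_, hs1, ?_⟩
  · have : (sLo:EReal) < (s1:EReal) :=
      lt_of_le_of_lt (le_trans (le_max_right _ _) (le_max_right _ _)) hzs1
    exact_mod_cast this
  · intro s hss hsHi
    have hmem : (s:EReal) ∈ Ioo z sHi :=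
      ⟨lt_of_le_of_lt (le_max_left _ _) (lt_trans hzs1 (by exact_mod_cast hss)), hsHi⟩
    exact hSsub (hzsub hmem)

lemma aux_divdiv (x y : ℝ) (hx : x ≠ 0) (hy : y ≠ 0) : x / (x / y) = y := by
  field_simp

theorem stmt9 (t' t'' A sLo : ℝ) (sHi : EReal) (a Q : ℝ → ℝ)
    (ht' : 0 ≤ t') (ht : t' < t'')
    (ha_cont : ContinuousOn a (Icc t' t''))
    (ha_t' : a t' = 0) (ha_t'' : a t'' = 0)
    (ha_pos : ∀ α ∈ Ioo t' t'', 0 < a α)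
    (hA : IsGreatest (a '' Icc t' t'') A)
    (hsLo : 0 ≤ sLo) (hs : (sLo : EReal) < sHi)
    (hQ_cont : ContinuousOn Q {s : ℝ | sLo < s ∧ (s : EReal) < sHi})
    (hQ_pos : ∀ s : ℝ, sLo < s → (s : EReal) < sHi → 0 < Q s)
    (hQ_zero : Tendsto Q (𝓝[>] sLo) (𝓝 0))
    (hQ_top : Tendsto Q (comap (fun s : ℝ => (s : EReal)) (𝓝[<] sHi)) atTop)
    (D Dt : ℝ → Set ℝ) (Pt : ℝ → ℝ → ℝ) (c : ℝ → ℝ)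
    (hD : ∀ l : ℝ, D l =
      {α : ℝ | α ∈ Ioo t' t'' ∧ sLo < l / a α ∧ ((l / a α : ℝ) : EReal) < sHi})
    (hDt : ∀ l : ℝ, Dt l = D l ∪ {α ∈ closure (D l) | sLo ≠ 0 ∧ a α = l / sLo})
    (hPt : ∀ l α : ℝ, Pt l α = if sLo ≠ 0 ∧ a α = l / sLo then 0 else Q (l / a α))
    (hc : ∀ l : ℝ, c l = sInf ((fun α => Pt l α - α) '' Dt l)) :
    (∀ l : ℝ, 0 < l → (l : EReal) < (A : EReal) * sHi →
      ∃ α ∈ Dt l, Pt l α - α = c l ∧ ∀ β ∈ Dt l, c l ≤ Pt l β - β) ∧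
    ContinuousOn c {l : ℝ | 0 < l ∧ (l : EReal) < (A : EReal) * sHi} ∧
    (-t'' < 0) ∧
    (∀ ε > (0 : ℝ), ∀ᶠ l in 𝓝[>] (0 : ℝ), c l < -t'' + ε) ∧
    Tendsto c (comap (fun l : ℝ => (l : EReal)) (𝓝[<] ((A : EReal) * sHi))) atTop := by
  -- basic facts
  have hVopen : IsOpen {s : ℝ | (s:EReal) < sHi} :=
    isOpen_Iio.preimage continuous_coe_real_ereal
  have hWopen : IsOpen {s : ℝ | sLo < s ∧ (s:EReal) < sHi} := by
    have heq : {s : ℝ | sLo < s ∧ (s:EReal) < sHi} =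
        Ioi sLo ∩ {s : ℝ | (s:EReal) < sHi} := rfl
    rw [heq]
    exact isOpen_Ioi.inter hVopen
  have hA0 : 0 < A := by
    have hmid : (t'+t'')/2 ∈ Ioo t' t'' := ⟨by linarith, by linarith⟩
    exact lt_of_lt_of_le (ha_pos _ hmid) (hA.2 ⟨_, ⟨le_of_lt hmid.1, le_of_lt hmid.2⟩, rfl⟩)
  have haLeA : ∀ β ∈ Icc t' t'', a β ≤ A := fun β hβ => hA.2 ⟨β, hβ, rfl⟩
  have hDmem : ∀ l α, α ∈ D l ↔
      (α ∈ Ioo t' t'' ∧ sLo < l / a α ∧ ((l / a α : ℝ) : EReal) < sHi) := by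
    intro l α; rw [hD]; rfl
  have hclos : ∀ l, closure (D l) ⊆ Icc t' t'' := by
    intro l
    have hsub : D l ⊆ Ioo t' t'' := fun α hα => ((hDmem l α).mp hα).1
    calc closure (D l) ⊆ closure (Ioo t' t'') := closure_mono hsub
    _ = Icc t' t'' := closure_Ioo ht.ne
  have hDtclos : ∀ l, Dt l ⊆ closure (D l) := by
    intro l; rw [hDt]
    exact union_subset subset_closure (fun α hα => hα.1)
  have hDtIcc : ∀ l, Dt l ⊆ Icc t' t'' := fun l => (hDtclos l).trans (hclos l)
  have hIoo_of : ∀ α, α ∈ Icc t' t'' → 0 < a α → α ∈ Ioo t' t'' := by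
    intro α hα h0
    rcases eq_or_lt_of_le hα.1 with h|h
    · exact absurd (h ▸ ha_t') (by rw [← h] at h0; linarith)
    rcases eq_or_lt_of_le hα.2 with h2|h2
    · exact absurd (h2 ▸ ha_t'') (by rw [h2] at h0; linarith)
    exact ⟨h, h2⟩
  have hDtpos : ∀ l : ℝ, 0 < l → ∀ α ∈ Dt l, 0 < a α := by
    intro l hl α hα
    rw [hDt] at hα
    rcases hα with hα | hα
    · exact ha_pos α ((hDmem l α).mp hα).1
    · rw [hα.2.2]
      exact div_pos hl (lt_of_le_of_ne hsLo (Ne.symm hα.2.1))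
  have hPt0 : ∀ l, ∀ α ∈ Dt l, 0 ≤ Pt l α := by
    intro l α hα
    rw [hPt]
    split_ifs with h
    · exact le_refl 0
    · rw [hDt] at hα
      rcases hα with hα | hα
      · obtain ⟨_, h2, h3⟩ := (hDmem l α).mp hα
        exact le_of_lt (hQ_pos _ h2 h3)
      · exact absurd hα.2 h
  have hBdd : ∀ l, BddBelow ((fun α => Pt l α - α) '' Dt l) := by
    intro l
    refine ⟨-t'', fun y hy => ?_⟩
    obtain ⟨β, hβ, rfl⟩ := hy
    have := hPt0 l β hβ
    have := (hDtIcc l hβ).2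
    simp only; linarith
  have hub : ∀ l, ∀ β ∈ Dt l, c l ≤ Pt l β - β := by
    intro l β hβ
    rw [hc]
    exact csInf_le (hBdd l) ⟨β, hβ, rfl⟩
  -- membership in D l from conditions on m/aα
  have hDmem' : ∀ l α, α ∈ Ioo t' t'' → sLo < l / a α → ((l / a α : ℝ) : EReal) < sHi →
      α ∈ D l := fun l α h1 h2 h3 => (hDmem l α).mpr ⟨h1, h2, h3⟩
  -- Pt = Q on D l
  have hDP : ∀ l α, 0 < l → α ∈ D l → Pt l α = Q (l / a α) := by
    intro l α hl hα
    rw [hPt, if_neg]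
    rintro ⟨h1, h2⟩
    obtain ⟨_, hlt, _⟩ := (hDmem l α).mp hα
    rw [h2, aux_divdiv l sLo (ne_of_gt hl) h1] at hlt
    exact lt_irrefl _ hlt
  have hIVT : ∀ v : ℝ, 0 < v → v ≤ A → ∃ α ∈ Ioo t' t'', a α = v := by
    obtain ⟨αA, hαA, haA⟩ := hA.1
    intro v hv hvA
    have hsub : Icc t' αA ⊆ Icc t' t'' := Icc_subset_Icc le_rfl hαA.2
    have hmem : v ∈ Icc (a t') (a αA) := by rw [ha_t', haA]; exact ⟨le_of_lt hv, hvA⟩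
    obtain ⟨α, hα, hav⟩ := intermediate_value_Icc hαA.1 (ha_cont.mono hsub) hmem
    refine ⟨α, ⟨lt_of_le_of_ne hα.1 ?_, lt_of_le_of_ne (le_trans hα.2 hαA.2) ?_⟩, hav⟩
    · intro h; rw [← h, ha_t'] at hav; linarith
    · intro h; rw [h, ha_t''] at hav; linarith
  have hIVT' : ∀ v β : ℝ, β ∈ Ioo t' t'' → 0 < v → v ≤ a β →
      ∃ α ∈ Ico β t'', a α = v := by
    intro v β hβ hv hvb
    have hsub : Icc β t'' ⊆ Icc t' t'' := Icc_subset_Icc (le_of_lt hβ.1) le_rfl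
    have hmem : v ∈ Icc (a t'') (a β) := by rw [ha_t'']; exact ⟨le_of_lt hv, hvb⟩
    obtain ⟨α, hα, hav⟩ := intermediate_value_Icc' (le_of_lt hβ.2) (ha_cont.mono hsub) hmem
    refine ⟨α, ⟨hα.1, lt_of_le_of_ne hα.2 ?_⟩, hav⟩
    intro h; rw [h, ha_t''] at hav; linarith
  -- nonemptiness of D l
  have hne : ∀ l : ℝ, 0 < l → (l:EReal) < (A:EReal) * sHi → ∃ α, α ∈ D l := by
    intro l hl hlA
    obtain ⟨smid, hsmid1, hsmid2⟩ := EReal.exists_between_coe_real hs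
    have hsmidR : sLo < smid := by exact_mod_cast hsmid1
    have hsmid0 : 0 < smid := lt_of_le_of_lt hsLo hsmidR
    rcases le_total A (l / smid) with hcase | hcase
    · obtain ⟨α, hαIoo, hav⟩ := hIVT A hA0 le_rfl
      refine ⟨α, hDmem' l α hαIoo ?_ ?_⟩
      · rw [hav]
        have h1 : A * smid ≤ l := by
          rw [le_div_iff₀ hsmid0] at hcase
          linarith
        have h2 : smid ≤ l / A := (le_div_iff₀ hA0).mpr (by linarith)
        linarith
      · rw [hav]
        exact (aux_div_lt hA0).mp hlA
    · have hv0 : 0 < l / smid := div_pos hl hsmid0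
      obtain ⟨α, hαIoo, hav⟩ := hIVT (l/smid) hv0 hcase
      refine ⟨α, hDmem' l α hαIoo ?_ ?_⟩ <;>
        rw [hav, aux_divdiv l smid (ne_of_gt hl) (ne_of_gt hsmid0)]
      · exact hsmidR
      · exact hsmid2
  -- the β* lemma
  have hbeta : ∀ l, 0 < l → sLo ≠ 0 → ∀ β ∈ Icc t' t'', l / sLo ≤ a β → c l ≤ -β := by
    intro l hl hsLo0 β hβ hab
    have hsLopos : 0 < sLo := lt_of_le_of_ne hsLo (Ne.symm hsLo0)
    have hw0 : 0 < l / sLo := div_pos hl hsLopos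
    have hβIoo : β ∈ Ioo t' t'' := hIoo_of β hβ (lt_of_lt_of_le hw0 hab)
    set S : Set ℝ := Icc β t'' ∩ a ⁻¹' Ici (l / sLo) with hSdef
    have hsubIcc : Icc β t'' ⊆ Icc t' t'' := Icc_subset_Icc (le_of_lt hβIoo.1) le_rfl
    have hSclosed : IsClosed S :=
      ContinuousOn.preimage_isClosed_of_isClosed (ha_cont.mono hsubIcc) isClosed_Icc
        isClosed_Ici
    have hScpt : IsCompact S := isCompact_Icc.of_isClosed_subset hSclosed
      (fun x hx => hsubIcc hx.1)
    have hSne : S.Nonempty := ⟨β, ⟨le_refl β, le_of_lt hβIoo.2⟩, hab⟩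
    obtain ⟨hγIcc, hγa⟩ := hScpt.sSup_mem hSne
    set γ := sSup S with hγdef
    have hγa' : l / sLo ≤ a γ := hγa
    have hγt'' : γ < t'' := by
      rcases lt_or_eq_of_le hγIcc.2 with h | h
      · exact h
      · rw [h, ha_t''] at hγa'; exact absurd hγa' (not_le.mpr hw0)
    have hγt' : t' < γ := lt_of_lt_of_le hβIoo.1 hγIcc.1
    have hγIcc' : γ ∈ Icc t' t'' := ⟨le_of_lt hγt', le_of_lt hγt''⟩
    have hupper : ∀ x, γ < x → x < t'' → a x < l / sLo := by
      intro x h1 h2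
      by_contra hcon
      push_neg at hcon
      have hxS : x ∈ S := ⟨⟨le_trans hγIcc.1 (le_of_lt h1), le_of_lt h2⟩, hcon⟩
      exact absurd (le_csSup hScpt.bddAbove hxS) (not_le.mpr h1)
    have hFne : (𝓝[Ioo γ t''] γ).NeBot := by
      rw [← mem_closure_iff_nhdsWithin_neBot, closure_Ioo (ne_of_lt hγt'')]
      exact ⟨le_refl γ, le_of_lt hγt''⟩
    have htendsa : Tendsto a (𝓝[Ioo γ t''] γ) (𝓝 (a γ)) :=
      (ha_cont γ hγIcc').mono_left
        (nhdsWithin_mono γ (fun x hx => hsubIcc ⟨le_trans hγIcc.1 (le_of_lt hx.1),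
          le_of_lt hx.2⟩))
    have hγle : a γ ≤ l / sLo := by
      refine le_of_tendsto htendsa ?_
      filter_upwards [self_mem_nhdsWithin] with x hx
      exact le_of_lt (hupper x hx.1 hx.2)
    have hγeq : a γ = l / sLo := le_antisymm hγle hγa'
    have haγpos : 0 < a γ := hγeq ▸ hw0
    have hev : ∀ᶠ x in 𝓝[Ioo γ t''] γ, x ∈ D l := by
      have h1 : ∀ᶠ x in 𝓝[Ioo γ t''] γ, 0 < a x :=
        htendsa.eventually (eventually_gt_nhds haγpos)
      have hdiv : Tendsto (fun x => l / a x) (𝓝[Ioo γ t''] γ) (𝓝 (l / a γ)) :=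
        tendsto_const_nhds.div htendsa (ne_of_gt haγpos)
      have hsLoeq : l / a γ = sLo := by
        rw [hγeq, aux_divdiv l sLo (ne_of_gt hl) hsLo0]
      rw [hsLoeq] at hdiv
      have h2 : ∀ᶠ x in 𝓝[Ioo γ t''] γ, ((l / a x : ℝ) : EReal) < sHi :=
        hdiv (hVopen.mem_nhds hs)
      filter_upwards [h1, h2, self_mem_nhdsWithin] with x hx1 hx2 hx3
      refine hDmem' l x ⟨lt_trans hγt' hx3.1, hx3.2⟩ ?_ hx2
      have h4 : a x * sLo < l := (lt_div_iff₀ hsLopos).mp (hupper x hx3.1 hx3.2)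
      rw [lt_div_iff₀ hx1]
      linarith [h4]
    have hγclos : γ ∈ closure (D l) :=
      mem_closure_iff_frequently.mpr (hev.frequently.filter_mono nhdsWithin_le_nhds)
    have hγDt : γ ∈ Dt l := by
      rw [hDt]; right; exact ⟨hγclos, hsLo0, hγeq⟩
    have hPtγ : Pt l γ = 0 := by rw [hPt, if_pos ⟨hsLo0, hγeq⟩]
    have := hub l γ hγDt
    rw [hPtγ] at this
    have hβγ : β ≤ γ := hγIcc.1
    linarith
  -- continuity of Pt l on Dt l
  have hDsubDt : ∀ l : ℝ, D l ⊆ Dt l := by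
    intro l; rw [hDt]; exact subset_union_left
  have hPtCont : ∀ l : ℝ, 0 < l → ContinuousOn (fun α => Pt l α) (Dt l) := by
    intro l hl α hα
    have hαIcc := hDtIcc l hα
    have haα : 0 < a α := hDtpos l hl α hα
    have hta : Tendsto a (𝓝[Dt l] α) (𝓝 (a α)) :=
      (ha_cont α hαIcc).mono_left (nhdsWithin_mono α (hDtIcc l))
    have htaD : Tendsto a (𝓝[D l] α) (𝓝 (a α)) :=
      hta.mono_left (nhdsWithin_mono α (hDsubDt l))
    have hdivD : Tendsto (fun β => l / a β) (𝓝[D l] α) (𝓝 (l / a α)) :=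
      tendsto_const_nhds.div htaD (ne_of_gt haα)
    have hPtD : ∀ᶠ β in 𝓝[D l] α, Pt l β = Q (l / a β) := by
      filter_upwards [self_mem_nhdsWithin] with β hβ
      exact hDP l β hl hβ
    have tD : Tendsto (fun β => Pt l β) (𝓝[D l] α) (𝓝 (Pt l α)) := by
      by_cases hcond : sLo ≠ 0 ∧ a α = l / sLo
      · have hs0 : l / a α = sLo := by
          rw [hcond.2, aux_divdiv _ _ (ne_of_gt hl) hcond.1]
        have hQ0 : Tendsto (fun β => Q (l / a β)) (𝓝[D l] α) (𝓝 0) := by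
          refine hQ_zero.comp (tendsto_nhdsWithin_iff.mpr ⟨hs0 ▸ hdivD, ?_⟩)
          filter_upwards [self_mem_nhdsWithin] with β hβ
          exact ((hDmem l β).mp hβ).2.1
        rw [hPt, if_pos hcond]
        exact Tendsto.congr' (hPtD.mono fun β h => h.symm) hQ0
      · have hαD : α ∈ D l := by
          rw [hDt] at hα
          rcases hα with h | h
          · exact h
          · exact absurd h.2 hcond
        have hQat : ContinuousAt Q (l / a α) :=
          hQ_cont.continuousAt (hWopen.mem_nhds ((hDmem l α).mp hαD).2)
        have hQt : Tendsto (fun β => Q (l / a β)) (𝓝[D l] α) (𝓝 (Q (l / a α))) :=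
          hQat.tendsto.comp hdivD
        rw [hDP l α hl hαD]
        exact Tendsto.congr' (hPtD.mono fun β h => h.symm) hQt
    have tB : Tendsto (fun β => Pt l β)
        (𝓝[{γ ∈ closure (D l) | sLo ≠ 0 ∧ a γ = l / sLo}] α) (𝓝 (Pt l α)) := by
      by_cases hcond : sLo ≠ 0 ∧ a α = l / sLo
      · have h0 : ∀ᶠ β in 𝓝[{γ ∈ closure (D l) | sLo ≠ 0 ∧ a γ = l / sLo}] α,
            Pt l β = 0 := by
          filter_upwards [self_mem_nhdsWithin] with β hβ
          rw [hPt, if_pos hβ.2]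
        rw [hPt, if_pos hcond]
        exact Tendsto.congr' (h0.mono fun β h => h.symm) tendsto_const_nhds
      · by_cases hsLo0 : sLo = 0
        · have hbot : ∀ᶠ β in 𝓝[{γ ∈ closure (D l) | sLo ≠ 0 ∧ a γ = l / sLo}] α,
              False := by
            filter_upwards [self_mem_nhdsWithin] with β hβ
            exact hβ.2.1 hsLo0
          rw [eventually_false_iff_eq_bot] at hbot
          rw [hbot]
          exact tendsto_bot
        · have hne' : a α ≠ l / sLo := fun h => hcond ⟨hsLo0, h⟩
          have htaB : Tendsto a
              (𝓝[{γ ∈ closure (D l) | sLo ≠ 0 ∧ a γ = l / sLo}] α) (𝓝 (a α)) := by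
            refine (ha_cont α hαIcc).mono_left (nhdsWithin_mono α ?_)
            intro β hβ
            exact hclos l hβ.1
          have hbot : ∀ᶠ β in 𝓝[{γ ∈ closure (D l) | sLo ≠ 0 ∧ a γ = l / sLo}] α,
              False := by
            filter_upwards [htaB (isOpen_compl_singleton.mem_nhds hne'),
              self_mem_nhdsWithin] with β hβ1 hβ2
            exact hβ1 hβ2.2.2
          rw [eventually_false_iff_eq_bot] at hbot
          rw [hbot]
          exact tendsto_bot
    show Tendsto (fun β => Pt l β) (𝓝[Dt l] α) (𝓝 (Pt l α))
    rw [hDt l, nhdsWithin_union, tendsto_sup]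
    exact ⟨tD, tB⟩
  have hclosbd : ∀ l : ℝ, 0 < l → sLo ≠ 0 → ∀ β ∈ closure (D l), a β ≤ l / sLo := by
    intro l hl h0 β hβ
    have hsLopos : 0 < sLo := lt_of_le_of_ne hsLo (Ne.symm h0)
    have hsubset : D l ⊆ Icc t' t'' ∩ a ⁻¹' Iic (l / sLo) := by
      intro γ hγ
      obtain ⟨hIoo, hlo, _⟩ := (hDmem l γ).mp hγ
      have haγ : 0 < a γ := ha_pos _ hIoo
      refine ⟨⟨le_of_lt hIoo.1, le_of_lt hIoo.2⟩, ?_⟩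
      have h1 : sLo * a γ < l := (lt_div_iff₀ haγ).mp hlo
      exact le_of_lt ((lt_div_iff₀ hsLopos).mpr (by linarith))
    have hcl : IsClosed (Icc t' t'' ∩ a ⁻¹' Iic (l / sLo)) :=
      ContinuousOn.preimage_isClosed_of_isClosed ha_cont isClosed_Icc isClosed_Iic
    exact ((closure_minimal hsubset hcl) hβ).2
  -- attainment (part 1)
  have hmin : ∀ l : ℝ, 0 < l → (l : EReal) < (A : EReal) * sHi →
      ∃ α ∈ Dt l, Pt l α - α = c l ∧ ∀ β ∈ Dt l, c l ≤ Pt l β - β := by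
    intro l hl hlA
    obtain ⟨α0, hα0⟩ := hne l hl hlA
    have hα0Dt := hDsubDt l hα0
    obtain ⟨hα0Ioo, hα0lo, hα0hi⟩ := (hDmem l α0).mp hα0
    have haα0 : 0 < a α0 := ha_pos _ hα0Ioo
    obtain ⟨s1, hs1z, hs1lo, hs1hi, hs1Q⟩ :=
      aux_Q_big hs hQ_top (Pt l α0 - α0 + t'') ((l / a α0 : ℝ) : EReal) hα0hi
    have hs1pos : 0 < s1 := lt_of_le_of_lt hsLo hs1lo
    have hα0s1 : l / a α0 < s1 := by exact_mod_cast hs1z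
    set K : Set ℝ := Dt l ∩ a ⁻¹' Ici (l / s1) with hKdef
    have hKsub : K ⊆ Dt l := inter_subset_left
    have hKeq : K = closure (D l) ∩ (Icc t' t'' ∩ a ⁻¹' Ici (l / s1)) := by
      apply Subset.antisymm
      · intro β hβ
        exact ⟨hDtclos l hβ.1, hDtIcc l hβ.1, hβ.2⟩
      · rintro β ⟨hβc, hβIcc, hβa⟩
        have haβ : 0 < a β := lt_of_lt_of_le (div_pos hl hs1pos) hβa
        have hβa' : l / s1 ≤ a β := hβa
        have hβIoo := hIoo_of β hβIcc haβ
        refine ⟨?_, hβa⟩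
        by_cases hcond : sLo ≠ 0 ∧ a β = l / sLo
        · rw [hDt]; right; exact ⟨hβc, hcond⟩
        · refine hDsubDt l (hDmem' l β hβIoo ?_ ?_)
          · rcases eq_or_ne sLo 0 with h0 | h0
            · rw [h0]; exact div_pos hl haβ
            · have hsLopos : 0 < sLo := lt_of_le_of_ne hsLo (Ne.symm h0)
              have hlt : a β < l / sLo :=
                lt_of_le_of_ne (hclosbd l hl h0 β hβc) (fun h => hcond ⟨h0, h⟩)
              have h1 : a β * sLo < l := (lt_div_iff₀ hsLopos).mp hlt
              rw [lt_div_iff₀ haβ]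
              linarith
          · have h1 : l ≤ a β * s1 := (div_le_iff₀ hs1pos).mp hβa'
            have h2 : l / a β ≤ s1 := (div_le_iff₀ haβ).mpr (by linarith)
            exact lt_of_le_of_lt (EReal.coe_le_coe_iff.mpr h2) hs1hi
    have hKclosed : IsClosed K := by
      rw [hKeq]
      exact isClosed_closure.inter
        (ContinuousOn.preimage_isClosed_of_isClosed ha_cont isClosed_Icc isClosed_Ici)
    have hKcpt : IsCompact K :=
      isCompact_Icc.of_isClosed_subset hKclosed (fun x hx => hDtIcc l (hKsub hx))
    have hα0K : α0 ∈ K := by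
      refine ⟨hα0Dt, ?_⟩
      have h1 : l < s1 * a α0 := (div_lt_iff₀ haα0).mp hα0s1
      show l / s1 ≤ a α0
      exact (div_le_iff₀ hs1pos).mpr (by linarith)
    have hfc : ContinuousOn (fun β => Pt l β - β) K :=
      ((hPtCont l hl).mono hKsub).sub continuousOn_id
    obtain ⟨αm, hαmK, hmin'⟩ := hKcpt.exists_isMinOn ⟨α0, hα0K⟩ hfc
    have hmins : ∀ x ∈ K, Pt l αm - αm ≤ Pt l x - x := fun x hx => hmin' hx
    refine ⟨αm, hKsub hαmK, ?_, fun β hβ => hub l β hβ⟩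
    have h1 : c l ≤ Pt l αm - αm := hub l αm (hKsub hαmK)
    have h2 : Pt l αm - αm ≤ c l := by
      rw [hc]
      refine le_csInf ⟨_, ⟨α0, hα0Dt, rfl⟩⟩ ?_
      rintro y ⟨β, hβ, rfl⟩
      by_cases hβK : β ∈ K
      · exact hmins β hβK
      · have haβ : 0 < a β := hDtpos l hl β hβ
        have hβt'' : β ≤ t'' := (hDtIcc l hβ).2
        have hlt : a β < l / s1 := by
          by_contra hcon
          exact hβK ⟨hβ, not_lt.mp hcon⟩
        have hgt : s1 < l / a β := by
          have h3 : a β * s1 < l := (lt_div_iff₀ hs1pos).mp hlt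
          rw [lt_div_iff₀ haβ]
          linarith
        have hβD : β ∈ D l := by
          rw [hDt] at hβ
          rcases hβ with h | h
          · exact h
          · exfalso
            rw [h.2.2, aux_divdiv l sLo (ne_of_gt hl) h.2.1] at hgt
            linarith
        have hhi := ((hDmem l β).mp hβD).2.2
        have hQβ : Pt l α0 - α0 + t'' < Q (l / a β) := hs1Q _ hgt hhi
        have hPtβ : Pt l β = Q (l / a β) := hDP l β hl hβD
        have h4 := hmins α0 hα0K
        simp only
        linarith
    exact le_antisymm h2 h1
  refine ⟨hmin, ?_, by linarith, ?_, ?_⟩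
  · -- continuity of c
    have hOopen : IsOpen {m : ℝ | 0 < m ∧ (m:EReal) < (A:EReal)*sHi} := by
      have heq : {m : ℝ | 0 < m ∧ (m:EReal) < (A:EReal)*sHi} =
          Ioi 0 ∩ {m : ℝ | (m:EReal) < (A:EReal)*sHi} := rfl
      rw [heq]
      exact isOpen_Ioi.inter (isOpen_Iio.preimage continuous_coe_real_ereal)
    intro l hlmem
    obtain ⟨hl0, hlA⟩ := hlmem
    refine ContinuousAt.continuousWithinAt ?_
    rw [ContinuousAt, Metric.tendsto_nhds]
    intro ε hε
    -- upper semicontinuity part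
    have husc : ∀ᶠ m in 𝓝 l, c m < c l + ε/2 := by
      obtain ⟨αl, hαlDt, hαlval, _⟩ := hmin l hl0 hlA
      have hexists : ∃ α ∈ D l, Q (l / a α) - α < c l + ε/4 := by
        rw [hDt] at hαlDt
        rcases hαlDt with hD' | hB'
        · refine ⟨αl, hD', ?_⟩
          rw [← hDP l αl hl0 hD', hαlval]
          linarith
        · have hPt0' : Pt l αl = 0 := by rw [hPt, if_pos hB'.2]
          have hclval : c l = -αl := by rw [← hαlval, hPt0']; ring
          have hFne : (𝓝[D l] αl).NeBot := mem_closure_iff_nhdsWithin_neBot.mp hB'.1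
          have hαlIcc : αl ∈ Icc t' t'' := hclos l hB'.1
          have hDIcc : D l ⊆ Icc t' t'' := fun x hx => hDtIcc l (hDsubDt l hx)
          have haαl : 0 < a αl := by
            rw [hB'.2.2]
            exact div_pos hl0 (lt_of_le_of_ne hsLo (Ne.symm hB'.2.1))
          have hta : Tendsto a (𝓝[D l] αl) (𝓝 (a αl)) :=
            (ha_cont αl hαlIcc).mono_left (nhdsWithin_mono _ hDIcc)
          have hdiv : Tendsto (fun β => l / a β) (𝓝[D l] αl) (𝓝 (l / a αl)) :=
            tendsto_const_nhds.div hta (ne_of_gt haαl)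
          have hla : l / a αl = sLo := by
            rw [hB'.2.2, aux_divdiv l sLo (ne_of_gt hl0) hB'.2.1]
          have hQ0 : Tendsto (fun β => Q (l / a β)) (𝓝[D l] αl) (𝓝 0) := by
            refine hQ_zero.comp (tendsto_nhdsWithin_iff.mpr ⟨hla ▸ hdiv, ?_⟩)
            filter_upwards [self_mem_nhdsWithin] with β hβ
            exact ((hDmem l β).mp hβ).2.1
          have hid : Tendsto (fun β : ℝ => β) (𝓝[D l] αl) (𝓝 αl) :=
            tendsto_id.mono_left nhdsWithin_le_nhds
          have hft : Tendsto (fun β => Q (l / a β) - β) (𝓝[D l] αl) (𝓝 (0 - αl)) :=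
            hQ0.sub hid
          have hev : ∀ᶠ β in 𝓝[D l] αl, Q (l / a β) - β < c l + ε/4 :=
            Tendsto.eventually_lt_const (by rw [hclval]; linarith) hft
          obtain ⟨α, hmem', hval'⟩ := (eventually_mem_nhdsWithin.and hev).exists
          exact ⟨α, hmem', hval'⟩
      obtain ⟨α, hαD, hαval⟩ := hexists
      obtain ⟨hαIoo, hαlo, hαhi⟩ := (hDmem l α).mp hαD
      have haα : 0 < a α := ha_pos _ hαIoo
      have hdivm : Tendsto (fun m => m / a α) (𝓝 l) (𝓝 (l / a α)) :=
        (continuous_id.div_const _).tendsto l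
      have e0 : ∀ᶠ m in 𝓝 l, 0 < m := eventually_gt_nhds hl0
      have e1 : ∀ᶠ m in 𝓝 l, sLo < m / a α := hdivm (isOpen_Ioi.mem_nhds hαlo)
      have e2 : ∀ᶠ m in 𝓝 l, ((m / a α : ℝ):EReal) < sHi := hdivm (hVopen.mem_nhds hαhi)
      have e3 : ∀ᶠ m in 𝓝 l, Q (m / a α) - α < c l + ε/2 := by
        have hQct : ContinuousAt Q (l / a α) :=
          hQ_cont.continuousAt (hWopen.mem_nhds ⟨hαlo, hαhi⟩)
        have ht : Tendsto (fun m => Q (m / a α) - α) (𝓝 l) (𝓝 (Q (l / a α) - α)) :=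
          (hQct.tendsto.comp hdivm).sub tendsto_const_nhds
        exact Tendsto.eventually_lt_const (by linarith) ht
      filter_upwards [e0, e1, e2, e3] with m hm0 hm1 hm2 hm3
      have hαDm : α ∈ D m := hDmem' m α hαIoo hm1 hm2
      have hcm := hub m α (hDsubDt m hαDm)
      rw [hDP m α hm0 hαDm] at hcm
      linarith
    -- lower semicontinuity part
    have hlsc : ∀ᶠ m in 𝓝 l, c l - ε/2 ≤ c m := by
      obtain ⟨s1, _, hs1lo, hs1hi, hs1Q⟩ :=
        aux_Q_big hs hQ_top (c l + t'' + 1) (sLo:EReal) hs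
      have hs1pos : 0 < s1 := lt_of_le_of_lt hsLo hs1lo
      obtain ⟨s2, hs2gt, hs2hi⟩ := EReal.exists_between_coe_real hs1hi
      have hs12 : s1 < s2 := by exact_mod_cast hs2gt
      have hρpos : 0 < l / (2 * s1) := by positivity
      set K2 : Set ℝ := Icc t' t'' ∩ a ⁻¹' Ici (l / (2 * s1)) with hK2def
      have hK2closed : IsClosed K2 :=
        ContinuousOn.preimage_isClosed_of_isClosed ha_cont isClosed_Icc isClosed_Ici
      have hK2cpt : IsCompact K2 :=
        isCompact_Icc.of_isClosed_subset hK2closed (fun x hx => hx.1)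
      set G : ℝ × ℝ → ℝ := fun p =>
        (if min (p.1 / a p.2) s2 ≤ sLo then 0 else Q (min (p.1 / a p.2) s2)) - p.2
        with hGdef
      -- continuity of G on the compact set
      have hQtcont : ContinuousOn (fun s : ℝ => if s ≤ sLo then (0:ℝ) else Q s)
          {s : ℝ | (s:EReal) < sHi} := by
        intro s hsV
        rcases lt_trichotomy s sLo with hlt | heq | hgt
        · have hev : (fun t : ℝ => if t ≤ sLo then (0:ℝ) else Q t) =ᶠ[𝓝 s]
              (fun _ => (0:ℝ)) := by
            filter_upwards [eventually_lt_nhds hlt] with t htt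
            exact if_pos (le_of_lt htt)
          exact ((continuousAt_congr hev).mpr continuousAt_const).continuousWithinAt
        · have hfs : (if s ≤ sLo then (0:ℝ) else Q s) = 0 := if_pos (le_of_eq heq)
          rw [ContinuousWithinAt]
          simp only [hfs]
          rw [heq]
          refine Tendsto.mono_left ?_ nhdsWithin_le_nhds
          have hsplit : (𝓝 sLo : Filter ℝ) = 𝓝[Iic sLo] sLo ⊔ 𝓝[Ioi sLo] sLo := by
            rw [← nhdsWithin_union, Iic_union_Ioi, nhdsWithin_univ]
          rw [hsplit, tendsto_sup]
          constructor
          · refine Tendsto.congr' ?_ tendsto_const_nhds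
            filter_upwards [self_mem_nhdsWithin] with t htt
            exact (if_pos htt).symm
          · refine Tendsto.congr' ?_ hQ_zero
            filter_upwards [self_mem_nhdsWithin] with t htt
            exact (if_neg (not_le.mpr htt)).symm
        · have hQct : ContinuousAt Q s := hQ_cont.continuousAt (hWopen.mem_nhds ⟨hgt, hsV⟩)
          have hev : (fun t : ℝ => if t ≤ sLo then (0:ℝ) else Q t) =ᶠ[𝓝 s] Q := by
            filter_upwards [eventually_gt_nhds hgt] with t htt
            exact if_neg (not_le.mpr htt)
          exact ((continuousAt_congr hev).mpr hQct).continuousWithinAt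
      have hQhat : Continuous
          (fun s : ℝ => if min s s2 ≤ sLo then (0:ℝ) else Q (min s s2)) := by
        refine hQtcont.comp_continuous (continuous_id.min continuous_const) ?_
        intro x
        exact lt_of_le_of_lt (EReal.coe_le_coe_iff.mpr (min_le_right x s2)) hs2hi
      have hacont2 : ContinuousOn (fun p : ℝ × ℝ => a p.2)
          (Icc (l-1) (l+1) ×ˢ K2) := by
        refine ha_cont.comp continuous_snd.continuousOn ?_
        intro p hp
        exact hp.2.1
      have hane : ∀ p ∈ (Icc (l-1) (l+1) ×ˢ K2), a p.2 ≠ 0 :=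
        fun p hp => ne_of_gt (lt_of_lt_of_le hρpos hp.2.2)
      have hdivcont : ContinuousOn (fun p : ℝ × ℝ => p.1 / a p.2)
          (Icc (l-1) (l+1) ×ˢ K2) :=
        continuous_fst.continuousOn.div hacont2 hane
      have hGcont : ContinuousOn G (Icc (l-1) (l+1) ×ˢ K2) :=
        (hQhat.comp_continuousOn hdivcont).sub continuous_snd.continuousOn
      -- pointwise lower bound at l
      have hP : ∀ β ∈ K2, c l ≤ G (l, β) := by
        intro β hβ
        have hβIcc := hβ.1
        have haβρ : l / (2 * s1) ≤ a β := hβ.2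
        have haβ0 : 0 < a β := lt_of_lt_of_le hρpos haβρ
        rcases le_or_gt (l / a β) s2 with hcase | hcase
        · rcases le_or_gt (l / a β) sLo with hc2 | hc2
          · have hsLo0 : sLo ≠ 0 := by
              intro h
              rw [h] at hc2
              exact absurd (div_pos hl0 haβ0) (not_lt.mpr hc2)
            have hsLopos : 0 < sLo := lt_of_le_of_ne hsLo (Ne.symm hsLo0)
            have hab : l / sLo ≤ a β := by
              have h1 : l ≤ sLo * a β := by
                have := (div_le_iff₀ haβ0).mp hc2
                linarith
              exact (div_le_iff₀ hsLopos).mpr (by linarith)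
            have hcb := hbeta l hl0 hsLo0 β hβIcc hab
            simp only [hGdef]
            rw [min_eq_left hcase, if_pos hc2]
            linarith
          · have hβIoo := hIoo_of β hβIcc haβ0
            have hhi2 : ((l / a β : ℝ):EReal) < sHi :=
              lt_of_le_of_lt (EReal.coe_le_coe_iff.mpr hcase) hs2hi
            have hβD : β ∈ D l := hDmem' l β hβIoo hc2 hhi2
            have hcb := hub l β (hDsubDt l hβD)
            rw [hDP l β hl0 hβD] at hcb
            simp only [hGdef]
            rw [min_eq_left hcase, if_neg (not_le.mpr hc2)]
            exact hcb
        · have hQs2 : c l + t'' + 1 < Q s2 := hs1Q s2 hs12 hs2hi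
          have hβt'' : β ≤ t'' := hβIcc.2
          simp only [hGdef]
          rw [min_eq_right (le_of_lt hcase),
            if_neg (not_le.mpr (lt_trans hs1lo hs12))]
          linarith
      -- uniform continuity
      have hTcpt : IsCompact (Icc (l-1) (l+1) ×ˢ K2) := isCompact_Icc.prod hK2cpt
      obtain ⟨δ, hδ0, hδ⟩ := Metric.uniformContinuousOn_iff.mp
        (hTcpt.uniformContinuousOn_of_continuous hGcont) (ε/2) (by linarith)
      have eO : ∀ᶠ m in 𝓝 l, 0 < m ∧ ((m : ℝ):EReal) < (A:EReal)*sHi :=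
        hOopen.mem_nhds ⟨hl0, hlA⟩
      have eB : ∀ᶠ m in 𝓝 l, |m - l| < min δ (min (l/2) 1) := by
        have hball : Metric.ball l (min δ (min (l/2) 1)) ∈ 𝓝 l :=
          Metric.ball_mem_nhds l (by positivity)
        filter_upwards [hball] with m hm
        rw [Metric.mem_ball, Real.dist_eq] at hm
        exact hm
      filter_upwards [eO, eB] with m hmO hmB
      obtain ⟨hm0, hmA⟩ := hmO
      have hmδ : |m - l| < δ := lt_of_lt_of_le hmB (min_le_left _ _)
      have hml2 : l / 2 < m := by
        have h1 : |m - l| < l/2 :=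
          lt_of_lt_of_le hmB (le_trans (min_le_right _ _) (min_le_left _ _))
        rw [abs_lt] at h1
        linarith [h1.1]
      have hm1' : |m - l| < 1 :=
        lt_of_lt_of_le hmB (le_trans (min_le_right _ _) (min_le_right _ _))
      have hmIcc : m ∈ Icc (l-1) (l+1) := by
        rw [abs_lt] at hm1'
        exact ⟨by linarith [hm1'.1], by linarith [hm1'.2]⟩
      have hlIcc : l ∈ Icc (l-1) (l+1) := ⟨by linarith, by linarith⟩
      show c l - ε/2 ≤ c m
      rw [hc m]
      obtain ⟨α0m, hα0m⟩ := hne m hm0 hmA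
      refine le_csInf ⟨_, ⟨α0m, hDsubDt m hα0m, rfl⟩⟩ ?_
      rintro y ⟨β, hβ, rfl⟩
      have haβ0 : 0 < a β := hDtpos m hm0 β hβ
      have hβIcc := hDtIcc m hβ
      rcases le_or_gt (m / a β) s1 with hcase | hcase
      · have haβρ : l / (2 * s1) ≤ a β := by
          have h1 : m ≤ s1 * a β := (div_le_iff₀ haβ0).mp hcase
          rw [div_le_iff₀ (by positivity : (0:ℝ) < 2 * s1)]
          nlinarith
        have hβK2 : β ∈ K2 := ⟨hβIcc, haβρ⟩
        have hmemT1 : (m, β) ∈ Icc (l-1) (l+1) ×ˢ K2 := ⟨hmIcc, hβK2⟩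
        have hmemT2 : (l, β) ∈ Icc (l-1) (l+1) ×ˢ K2 := ⟨hlIcc, hβK2⟩
        have hdist : dist (m, β) (l, β) < δ := by
          rw [Prod.dist_eq]
          simp only [dist_self]
          rw [Real.dist_eq]
          exact max_lt hmδ hδ0
        have hGG := hδ (m, β) hmemT1 (l, β) hmemT2 hdist
        rw [Real.dist_eq, abs_lt] at hGG
        have hPle := hP β hβK2
        have hfeq : Pt m β - β = G (m, β) := by
          simp only [hGdef]
          by_cases hcond : sLo ≠ 0 ∧ a β = m / sLo
          · rw [hPt, if_pos hcond]
            have hms : m / a β = sLo := by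
              rw [hcond.2, aux_divdiv m sLo (ne_of_gt hm0) hcond.1]
            rw [hms, min_eq_left (by linarith : sLo ≤ s2), if_pos (le_refl sLo)]
          · have hβD : β ∈ D m := by
              rw [hDt] at hβ
              rcases hβ with h | h
              · exact h
              · exact absurd h.2 hcond
            have hlo2 : sLo < m / a β := ((hDmem m β).mp hβD).2.1
            rw [hPt, if_neg hcond, min_eq_left (le_trans hcase (le_of_lt hs12)),
              if_neg (not_le.mpr hlo2)]
        show c l - ε/2 ≤ Pt m β - β
        rw [hfeq]
        simp only [hGdef] at hGG hPle ⊢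
        linarith [hGG.1, hPle]
      · have hβD : β ∈ D m := by
          rw [hDt] at hβ
          rcases hβ with h | h
          · exact h
          · exfalso
            have hms : m / a β = sLo := by
              rw [h.2.2, aux_divdiv m sLo (ne_of_gt hm0) h.2.1]
            rw [hms] at hcase
            linarith
        have hhi2 := ((hDmem m β).mp hβD).2.2
        have hQb := hs1Q _ hcase hhi2
        have hβt'' : β ≤ t'' := hβIcc.2
        show c l - ε/2 ≤ Pt m β - β
        rw [hDP m β hm0 hβD]
        linarith
    filter_upwards [husc, hlsc] with m h1 h2
    rw [Real.dist_eq, abs_lt]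
    constructor <;> linarith
  · -- behavior at 0
    intro ε hε
    have hsmall : ∀ᶠ s in 𝓝[>] sLo, Q s < ε/2 :=
      Tendsto.eventually_lt_const (by linarith) hQ_zero
    have hV : ∀ᶠ s in 𝓝[>] sLo, ((s : ℝ) : EReal) < sHi :=
      mem_nhdsWithin_of_mem_nhds (hVopen.mem_nhds hs)
    obtain ⟨sst, ⟨h1, h2⟩, h3⟩ := ((eventually_mem_nhdsWithin.and hsmall).and hV).exists
    have hsst0 : 0 < sst := lt_of_le_of_lt hsLo h1
    have hα0 : max (t'' - ε/2) ((t'+t'')/2) ∈ Ioo t' t'' :=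
      ⟨lt_of_lt_of_le (by linarith) (le_max_right _ _), max_lt (by linarith) (by linarith)⟩
    have haα0 : 0 < a (max (t'' - ε/2) ((t'+t'')/2)) := ha_pos _ hα0
    have hIoo : Ioo (0:ℝ) (sst * a (max (t'' - ε/2) ((t'+t'')/2))) ∈ 𝓝[>] (0:ℝ) :=
      Ioo_mem_nhdsGT_of_mem ⟨le_refl 0, by positivity⟩
    filter_upwards [hIoo] with l hl
    obtain ⟨hl0, hlu⟩ := hl
    have hw0 : 0 < l / sst := div_pos hl0 hsst0
    have hwle : l / sst ≤ a (max (t'' - ε/2) ((t'+t'')/2)) :=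
      le_of_lt ((div_lt_iff₀ hsst0).mpr (by linarith))
    obtain ⟨α, hαmem, hαa⟩ := hIVT' (l / sst) _ hα0 hw0 hwle
    have hαIoo : α ∈ Ioo t' t'' := ⟨lt_of_lt_of_le hα0.1 hαmem.1, hαmem.2⟩
    have hla : l / a α = sst := by
      rw [hαa, aux_divdiv l sst (ne_of_gt hl0) (ne_of_gt hsst0)]
    have hαD : α ∈ D l := hDmem' l α hαIoo (by rw [hla]; exact h1) (by rw [hla]; exact h3)
    have hPtα : Pt l α = Q sst := by rw [hDP l α hl0 hαD, hla]
    have hcl := hub l α (hDsubDt l hαD)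
    rw [hPtα] at hcl
    have hαge : max (t'' - ε/2) ((t'+t'')/2) ≤ α := hαmem.1
    have hα0ge : t'' - ε/2 ≤ max (t'' - ε/2) ((t'+t'')/2) := le_max_left _ _
    linarith
  · -- behavior at A*sHi
    rw [tendsto_atTop]
    intro M
    obtain ⟨s1, _, hs1lo, hs1hi, hs1Q⟩ := aux_Q_big hs hQ_top (M + t'') (sLo:EReal) hs
    have hs1pos : 0 < s1 := lt_of_le_of_lt hsLo hs1lo
    have hAs1div : (A * s1) / A = s1 := by field_simp
    have hb : ((A * s1 : ℝ) : EReal) < (A:EReal) * sHi :=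
      (aux_div_lt hA0).mpr (by rw [hAs1div]; exact hs1hi)
    have hmem : Ioo ((A*s1 : ℝ):EReal) ((A:EReal)*sHi) ∈ 𝓝[<] ((A:EReal)*sHi) :=
      Ioo_mem_nhdsLT hb
    refine mem_of_superset (preimage_mem_comap hmem) ?_
    intro l hl
    obtain ⟨hl1, hl2⟩ := hl
    have hl1' : ((A * s1 : ℝ) : EReal) < (l : EReal) := hl1
    have hAs1 : A * s1 < l := by exact_mod_cast hl1'
    have hl0 : 0 < l := lt_trans (by positivity) hAs1
    show M ≤ c l
    rw [hc l]
    obtain ⟨α0, hα0⟩ := hne l hl0 hl2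
    refine le_csInf ⟨_, ⟨α0, hDsubDt l hα0, rfl⟩⟩ ?_
    rintro y ⟨β, hβ, rfl⟩
    have haβpos := hDtpos l hl0 β hβ
    have hβIcc := hDtIcc l hβ
    have haβA : a β ≤ A := haLeA β hβIcc
    have hβD : β ∈ D l := by
      rw [hDt] at hβ
      rcases hβ with h | h
      · exact h
      · exfalso
        have hsLopos : 0 < sLo := lt_of_le_of_ne hsLo (Ne.symm h.2.1)
        have hd1 : l / sLo ≤ A := h.2.2 ▸ haβA
        have hd2 : l ≤ A * sLo := by
          rw [div_le_iff₀ hsLopos] at hd1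
          linarith
        nlinarith
    have hgt : s1 < l / a β := by
      rw [lt_div_iff₀ haβpos]
      nlinarith
    have hhi := ((hDmem l β).mp hβD).2.2
    have hQb := hs1Q _ hgt hhi
    have hPtβ : Pt l β = Q (l / a β) := hDP l β hl0 hβD
    have hβt'' : β ≤ t'' := hβIcc.2
    show M ≤ Pt l β - β
    linarith
end

section
/- The set Z := {λ ∈ (0, A·s₊) : c(λ) = 0} is nonempty and has a minimum λ₀ and a maximum λ̃₀, with 0 < λ₀ ≤ λ̃₀ < A·s₊; c(λ) < 0 for 0 < λ < λ₀ and c(λ) > 0 for λ̃₀ < λ < A·s₊. Furthermore: (i) if 0 < λ < λ₀ then P_λ has at least two fixed points α₁ < α₂ in D_λ (i.e. points with P_λ(α) = α, t' < α₁ < α₂ < t''); (ii) if λ > λ̃₀ then P_λ has no fixed point in D_λ. -/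
open Set Filter Topology

set_option maxHeartbeats 2000000 in
theorem stmt10 (t' t'' A sLo : ℝ) (sHi : EReal) (a Q : ℝ → ℝ)
    (ht' : 0 ≤ t') (ht : t' < t'')
    (ha_cont : ContinuousOn a (Icc t' t''))
    (ha_t' : a t' = 0) (ha_t'' : a t'' = 0)
    (ha_pos : ∀ α ∈ Ioo t' t'', 0 < a α)
    (hA : IsGreatest (a '' Icc t' t'') A)
    (hsLo : 0 ≤ sLo) (hs : (sLo : EReal) < sHi)
    (hQ_cont : ContinuousOn Q {s : ℝ | sLo < s ∧ (s : EReal) < sHi})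
    (hQ_pos : ∀ s : ℝ, sLo < s → (s : EReal) < sHi → 0 < Q s)
    (hQ_zero : Tendsto Q (𝓝[>] sLo) (𝓝 0))
    (hQ_top : Tendsto Q (comap (fun s : ℝ => (s : EReal)) (𝓝[<] sHi)) atTop)
    (D Dt : ℝ → Set ℝ) (Pt : ℝ → ℝ → ℝ) (c : ℝ → ℝ)
    (hD : ∀ l : ℝ, D l =
      {α : ℝ | α ∈ Ioo t' t'' ∧ sLo < l / a α ∧ ((l / a α : ℝ) : EReal) < sHi})
    (hDt : ∀ l : ℝ, Dt l = D l ∪ {α ∈ closure (D l) | sLo ≠ 0 ∧ a α = l / sLo})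
    (hPt : ∀ l α : ℝ, Pt l α = if sLo ≠ 0 ∧ a α = l / sLo then 0 else Q (l / a α))
    (hc : ∀ l : ℝ, c l = sInf ((fun α => Pt l α - α) '' Dt l)) :
    ∃ lam₀ lamt₀ : ℝ,
      IsLeast {l : ℝ | 0 < l ∧ (l : EReal) < (A : EReal) * sHi ∧ c l = 0} lam₀ ∧
      IsGreatest {l : ℝ | 0 < l ∧ (l : EReal) < (A : EReal) * sHi ∧ c l = 0} lamt₀ ∧
      0 < lam₀ ∧ lam₀ ≤ lamt₀ ∧ (lamt₀ : EReal) < (A : EReal) * sHi ∧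
      (∀ l : ℝ, 0 < l → l < lam₀ → c l < 0) ∧
      (∀ l : ℝ, lamt₀ < l → (l : EReal) < (A : EReal) * sHi → 0 < c l) ∧
      (∀ l : ℝ, 0 < l → l < lam₀ →
        ∃ α₁ α₂ : ℝ, α₁ ∈ D l ∧ α₂ ∈ D l ∧ α₁ < α₂ ∧
          Q (l / a α₁) = α₁ ∧ Q (l / a α₂) = α₂) ∧
      (∀ l : ℝ, lamt₀ < l → ∀ α ∈ D l, Q (l / a α) ≠ α) := by
  classical
  -- ==== basic facts ====
  have ht''pos : 0 < t'' := lt_of_le_of_lt ht' ht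
  have hmid : (t' + t'') / 2 ∈ Ioo t' t'' := ⟨by linarith, by linarith⟩
  have haA : ∀ α, α ∈ Icc t' t'' → a α ≤ A := fun α hα => hA.2 ⟨α, hα, rfl⟩
  have hA0 : 0 < A :=
    lt_of_lt_of_le (ha_pos _ hmid) (haA _ (Ioo_subset_Icc_self hmid))
  obtain ⟨am, hamIcc, hamA⟩ := hA.1
  have hamIoo : am ∈ Ioo t' t'' := by
    refine ⟨lt_of_le_of_ne hamIcc.1 ?_, lt_of_le_of_ne hamIcc.2 ?_⟩
    · intro h; rw [← h, ha_t'] at hamA; exact absurd hamA.symm (ne_of_gt hA0)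
    · intro h; rw [h, ha_t''] at hamA; exact absurd hamA.symm (ne_of_gt hA0)
  have hIoo_of : ∀ β, β ∈ Icc t' t'' → 0 < a β → β ∈ Ioo t' t'' := by
    intro β hβ h
    refine ⟨lt_of_le_of_ne hβ.1 ?_, lt_of_le_of_ne hβ.2 ?_⟩
    · intro heq; rw [← heq, ha_t'] at h; exact lt_irrefl _ h
    · intro heq; rw [heq, ha_t''] at h; exact lt_irrefl _ h
  have hddc : ∀ x y : ℝ, x ≠ 0 → y ≠ 0 → x / (x / y) = y := by
    intro x y hx hy; field_simp
  have hcoe0sHi : ((0:ℝ):EReal) < sHi := lt_of_le_of_lt (EReal.coe_le_coe_iff.2 hsLo) hs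
  have hlt_mono : ∀ s s' : ℝ, s ≤ s' → ((s':ℝ):EReal) < sHi → ((s:ℝ):EReal) < sHi :=
    fun s s' h h' => lt_of_le_of_lt (EReal.coe_le_coe_iff.2 h) h'
  have hcase : sHi = ⊤ ∨ ∃ S : ℝ, sHi = (S:EReal) ∧ sLo < S := by
    rcases eq_or_ne sHi ⊤ with h | h
    · exact Or.inl h
    · have hbot : sHi ≠ ⊥ := by
        intro hb; rw [hb] at hs; exact absurd hs (by simp)
      refine Or.inr ⟨sHi.toReal, (EReal.coe_toReal h hbot).symm, ?_⟩
      rw [← EReal.coe_lt_coe_iff, EReal.coe_toReal h hbot]; exact hs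
  have hO : IsOpen {s : ℝ | sLo < s ∧ (s : EReal) < sHi} := by
    have h1 : IsOpen {s : ℝ | sLo < s} := isOpen_Ioi
    have h2 : IsOpen {s : ℝ | (s : EReal) < sHi} :=
      isOpen_Iio.preimage continuous_coe_real_ereal
    exact h1.inter h2
  -- ==== Qh : extension of Q by 0 below sLo ====
  set Qh : ℝ → ℝ := fun s => if s ≤ sLo then 0 else Q s with hQh
  have hQh_eq0 : ∀ s, s ≤ sLo → Qh s = 0 := by
    intro s h; simp only [hQh]; rw [if_pos h]
  have hQh_eq : ∀ s, sLo < s → Qh s = Q s := by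
    intro s h; simp only [hQh]; rw [if_neg (not_le.2 h)]
  have hQh_nonneg : ∀ s, ((s:ℝ):EReal) < sHi → 0 ≤ Qh s := by
    intro s h
    rcases le_or_gt s sLo with h1 | h1
    · rw [hQh_eq0 s h1]
    · rw [hQh_eq s h1]; exact (hQ_pos s h1 h).le
  have hQhCont : ∀ s : ℝ, ((s:ℝ):EReal) < sHi → ContinuousAt Qh s := by
    intro s hs'
    rcases lt_trichotomy s sLo with h | h | h
    · have hev : (fun _ : ℝ => (0:ℝ)) =ᶠ[𝓝 s] Qh := by
        filter_upwards [Iio_mem_nhds h] with x hx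
        exact (hQh_eq0 x (le_of_lt hx)).symm
      have : Tendsto Qh (𝓝 s) (𝓝 0) := tendsto_const_nhds.congr' hev
      unfold ContinuousAt
      rwa [hQh_eq0 s h.le]
    · subst h
      unfold ContinuousAt
      rw [hQh_eq0 s le_rfl]
      rw [← nhdsLE_sup_nhdsGT (a := s)]
      rw [tendsto_sup]
      constructor
      · refine tendsto_const_nhds.congr' ?_
        filter_upwards [eventually_mem_nhdsWithin] with x hx
        exact (hQh_eq0 x hx).symm
      · refine hQ_zero.congr' ?_
        filter_upwards [eventually_mem_nhdsWithin] with x hx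
        exact (hQh_eq x hx).symm
    · have hQc : ContinuousAt Q s := hQ_cont.continuousAt (hO.mem_nhds ⟨h, hs'⟩)
      have hev : Q =ᶠ[𝓝 s] Qh := by
        filter_upwards [Ioi_mem_nhds h] with x hx
        exact (hQh_eq x hx).symm
      unfold ContinuousAt
      rw [hQh_eq s h]
      exact hQc.congr' hev
  -- ==== Q large near sHi ====
  have hQbig : ∀ M b : ℝ, ((b:ℝ):EReal) < sHi → ∃ B : ℝ, b ≤ B ∧ sLo < B ∧ 0 < B ∧
      ((B:ℝ):EReal) < sHi ∧ ∀ s : ℝ, B ≤ s → ((s:ℝ):EReal) < sHi → M < Q s := by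
    intro M b hb
    have h1 : {s : ℝ | M < Q s} ∈ comap (fun s : ℝ => (s : EReal)) (𝓝[<] sHi) :=
      hQ_top.eventually (eventually_gt_atTop M)
    rw [mem_comap] at h1
    obtain ⟨t, ht1, ht2⟩ := h1
    obtain ⟨u, hu, hsub⟩ := (mem_nhdsLT_iff_exists_Ioo_subset' hs).1 ht1
    have hmaxlt : ((max b sLo : ℝ) : EReal) < sHi := by
      rcases max_cases b sLo with ⟨h3, _⟩ | ⟨h3, _⟩ <;> rw [h3]
      · exact hb
      · exact hs
    have hu'lt : max u ((max b sLo : ℝ) : EReal) < sHi := max_lt hu hmaxlt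
    obtain ⟨r, hr1, hr2⟩ := EReal.lt_iff_exists_real_btwn.1 hu'lt
    have hbr : b < r := by
      have : ((b:ℝ):EReal) < (r:EReal) :=
        lt_of_le_of_lt (le_trans (EReal.coe_le_coe_iff.2 (le_max_left b sLo)) (le_max_right _ _)) hr1
      exact EReal.coe_lt_coe_iff.1 this
    have hsLor : sLo < r := by
      have : ((sLo:ℝ):EReal) < (r:EReal) :=
        lt_of_le_of_lt (le_trans (EReal.coe_le_coe_iff.2 (le_max_right b sLo)) (le_max_right _ _)) hr1
      exact EReal.coe_lt_coe_iff.1 this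
    refine ⟨r, hbr.le, hsLor, lt_of_le_of_lt hsLo hsLor, hr2, ?_⟩
    intro s hrs hssHi
    apply ht2
    show (s : EReal) ∈ t
    apply hsub
    have hur : u < (s:EReal) :=
      lt_of_lt_of_le (lt_of_le_of_lt le_sup_left hr1) (EReal.coe_le_coe_iff.2 hrs)
    exact ⟨hur, hssHi⟩
  -- ==== Q small near sLo ====
  have hQsmall : ∀ ε : ℝ, 0 < ε → ∃ s₁ : ℝ, sLo < s₁ ∧ ((s₁:ℝ):EReal) < sHi ∧
      ∀ s : ℝ, sLo < s → s < s₁ → Q s < ε := by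
    intro ε hε
    have h1 : Q ⁻¹' (Iio ε) ∈ 𝓝[>] sLo := hQ_zero (Iio_mem_nhds hε)
    obtain ⟨u, hu, hsub⟩ := mem_nhdsGT_iff_exists_Ioo_subset.1 h1
    obtain ⟨r, hr1, hr2⟩ := EReal.lt_iff_exists_real_btwn.1 hs
    have hsLor : sLo < r := EReal.coe_lt_coe_iff.1 hr1
    refine ⟨min u r, lt_min hu hsLor, hlt_mono _ r (min_le_right _ _) hr2, ?_⟩
    intro s h1' h2'
    exact hsub ⟨h1', lt_of_lt_of_le h2' (min_le_left _ _)⟩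
  -- ==== value identification on Dt ====
  have hval : ∀ l : ℝ, 0 < l → ∀ α ∈ Dt l,
      Pt l α - α = Qh (l / a α) - α ∧ α ∈ Icc t' t'' ∧ 0 < a α ∧
      sLo ≤ l / a α ∧ ((l / a α : ℝ) : EReal) < sHi := by
    intro l hl α hα
    rw [hDt l] at hα
    rcases hα with hα | hα
    · rw [hD l] at hα
      obtain ⟨hIoo, h1, h2⟩ := hα
      have hapos := ha_pos α hIoo
      have hnotif : ¬ (sLo ≠ 0 ∧ a α = l / sLo) := by
        rintro ⟨h3, h4⟩
        rw [h4] at h1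
        rw [hddc l sLo (ne_of_gt hl) h3] at h1
        exact lt_irrefl _ h1
      rw [hPt, if_neg hnotif, hQh_eq _ h1]
      exact ⟨rfl, Ioo_subset_Icc_self hIoo, hapos, h1.le, h2⟩
    · obtain ⟨hcl, hne, haeq⟩ := hα
      have hsLo0 : 0 < sLo := lt_of_le_of_ne hsLo (Ne.symm hne)
      have hapos : 0 < a α := by rw [haeq]; positivity
      have hIcc : α ∈ Icc t' t'' := by
        have hsub : closure (D l) ⊆ Icc t' t'' := by
          rw [hD l]
          refine closure_minimal ?_ isClosed_Icc
          intro x hx; exact Ioo_subset_Icc_self hx.1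
        exact hsub hcl
      have hdiv : l / a α = sLo := by
        rw [haeq, hddc l sLo (ne_of_gt hl) hne]
      rw [hPt, if_pos ⟨hne, haeq⟩, hdiv, hQh_eq0 _ le_rfl]
      exact ⟨rfl, hIcc, hapos, le_rfl, hs⟩
  have hbdd : ∀ l : ℝ, 0 < l → ∀ x ∈ ((fun α => Pt l α - α) '' Dt l), -t'' ≤ x := by
    rintro l hl x ⟨α, hα, rfl⟩
    obtain ⟨hveq, hIcc, _, _, hlt⟩ := hval l hl α hα
    show -t'' ≤ Pt l α - α
    rw [hveq]
    have h1 := hQh_nonneg _ hlt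
    have h2 := hIcc.2
    linarith
  have hcLe : ∀ l : ℝ, 0 < l → ∀ α ∈ Dt l, c l ≤ Qh (l / a α) - α := by
    intro l hl α hα
    rw [hc l]
    have h1 : Pt l α - α ∈ ((fun α => Pt l α - α) '' Dt l) := ⟨α, hα, rfl⟩
    have h2 := csInf_le ⟨-t'', fun x hx => hbdd l hl x hx⟩ h1
    rw [(hval l hl α hα).1] at h2
    exact h2
  -- ==== nonemptiness of D l for l in I ====
  have hDne : ∀ l : ℝ, 0 < l → (l:EReal) < (A:EReal) * sHi → ∃ α, α ∈ D l := by
    intro l hl hlAS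
    have hs0ex : ∃ s₀ : ℝ, sLo < s₀ ∧ l / A ≤ s₀ ∧ ((s₀:ℝ):EReal) < sHi := by
      rcases hcase with htop | ⟨S, hS, hSlo⟩
      · exact ⟨max (l / A) sLo + 1, by
          have := le_max_right (l / A) sLo; linarith, by
          have := le_max_left (l / A) sLo; linarith, by rw [htop]; exact EReal.coe_lt_top _⟩
      · have hlAS' : l < A * S := by
          rw [hS, ← EReal.coe_mul] at hlAS
          exact EReal.coe_lt_coe_iff.1 hlAS
        have hS0 : 0 < S := lt_of_le_of_lt hsLo hSlo
        have h1 : l / A < S := by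
          rw [div_lt_iff₀ hA0]; linarith [mul_comm A S]
        have h2 : max (l / A) sLo < S := max_lt h1 hSlo
        refine ⟨(max (l / A) sLo + S) / 2, ?_, ?_, ?_⟩
        · have := le_max_right (l / A) sLo; linarith
        · have := le_max_left (l / A) sLo; linarith
        · rw [hS, EReal.coe_lt_coe_iff]; linarith
    obtain ⟨s₀, hs₀1, hs₀2, hs₀3⟩ := hs0ex
    have hs₀pos : 0 < s₀ := lt_of_le_of_lt hsLo hs₀1
    have hv0 : 0 < l / s₀ := div_pos hl hs₀pos
    have hvA : l / s₀ ≤ A := by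
      rw [div_le_iff₀ hs₀pos]
      rw [div_le_iff₀ hA0] at hs₀2
      linarith [mul_comm A s₀, mul_comm s₀ A]
    have hivt : l / s₀ ∈ Ioc (a t') (a am) := by
      rw [ha_t', hamA]; exact ⟨hv0, hvA⟩
    obtain ⟨α, hαmem, hαv⟩ :=
      intermediate_value_Ioc hamIoo.1.le (ha_cont.mono (Icc_subset_Icc le_rfl hamIcc.2)) hivt
    have hαIoo : α ∈ Ioo t' t'' := ⟨hαmem.1, lt_of_le_of_lt hαmem.2 hamIoo.2⟩
    have hdiveq : l / a α = s₀ := by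
      rw [hαv, hddc l s₀ (ne_of_gt hl) (ne_of_gt hs₀pos)]
    refine ⟨α, ?_⟩
    rw [hD l]
    exact ⟨hαIoo, by rw [hdiveq]; exact hs₀1, by rw [hdiveq]; exact hs₀3⟩
  have hDsubDt : ∀ l : ℝ, ∀ α, α ∈ D l → α ∈ Dt l := by
    intro l α h; rw [hDt l]; exact Or.inl h
  have hDtne : ∀ l : ℝ, 0 < l → (l:EReal) < (A:EReal) * sHi →
      ((fun α => Pt l α - α) '' Dt l).Nonempty := by
    intro l hl hlAS
    obtain ⟨α, hα⟩ := hDne l hl hlAS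
    exact ⟨_, ⟨α, hDsubDt l α hα, rfl⟩⟩
  -- ==== closed superlevel sets of a ====
  have hclosedcap : ∀ γ v : ℝ, t' ≤ γ → IsClosed {β : ℝ | β ∈ Icc γ t'' ∧ v ≤ a β} := by
    intro γ v hγ
    have h1 : ContinuousOn a (Icc γ t'') := ha_cont.mono (Icc_subset_Icc hγ le_rfl)
    have h2 : IsClosed (Icc γ t'' ∩ a ⁻¹' (Ici v)) :=
      h1.preimage_isClosed_of_isClosed isClosed_Icc isClosed_Ici
    exact h2
  -- ==== last crossing ====
  have hLC : ∀ v γ : ℝ, 0 < v → γ ∈ Icc t' t'' → v ≤ a γ →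
      ∃ α2, γ ≤ α2 ∧ α2 < t'' ∧ a α2 = v ∧ ∀ β, α2 < β → β ≤ t'' → a β < v := by
    intro v γ hv hγ hvγ
    set E := {β : ℝ | β ∈ Icc γ t'' ∧ v ≤ a β} with hE
    have hEclosed : IsClosed E := hclosedcap γ v hγ.1
    have hEne : γ ∈ E := ⟨⟨le_rfl, hγ.2⟩, hvγ⟩
    have hEbdd : BddAbove E := ⟨t'', fun β hβ => hβ.1.2⟩
    set α2 := sSup E with hα2
    have hα2E : α2 ∈ E := hEclosed.csSup_mem ⟨γ, hEne⟩ hEbdd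
    have hγα2 : γ ≤ α2 := le_csSup hEbdd hEne
    have hα2t'' : α2 < t'' := by
      refine lt_of_le_of_ne hα2E.1.2 ?_
      intro h
      have := hα2E.2
      rw [h, ha_t''] at this
      linarith
    have hub : ∀ β, α2 < β → β ≤ t'' → a β < v := by
      intro β h1 h2
      by_contra h
      push_neg at h
      exact absurd (le_csSup hEbdd ⟨⟨le_trans hγα2 h1.le, h2⟩, h⟩) (not_le.2 h1)
    have haeq : a α2 = v := by
      refine le_antisymm ?_ hα2E.2
      by_contra h
      push_neg at h
      have hα2Icc : α2 ∈ Icc t' t'' := ⟨le_trans hγ.1 hγα2, hα2E.1.2⟩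
      have hcw : ContinuousWithinAt a (Icc t' t'') α2 := ha_cont.continuousWithinAt hα2Icc
      have hnb : (𝓝[Ioc α2 t''] α2).NeBot := by
        rw [← mem_closure_iff_nhdsWithin_neBot, closure_Ioc hα2t''.ne]
        exact ⟨le_rfl, hα2t''.le⟩
      have hmono : 𝓝[Ioc α2 t''] α2 ≤ 𝓝[Icc t' t''] α2 :=
        nhdsWithin_mono _ (fun β hβ => ⟨le_trans hα2Icc.1 hβ.1.le, hβ.2⟩)
      have hev : ∀ᶠ β in 𝓝[Ioc α2 t''] α2, v < a β := hmono (hcw (Ioi_mem_nhds h))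
      obtain ⟨β, hβv, hβmem⟩ := (hev.and eventually_mem_nhdsWithin).exists
      exact absurd (le_csSup hEbdd ⟨⟨le_trans hγα2 hβmem.1.le, hβmem.2⟩, hβv.le⟩)
        (not_le.2 hβmem.1)
    exact ⟨α2, hγα2, hα2t'', haeq, hub⟩
  -- ==== near sLo-boundary bound ====
  have hNB : ∀ l γ ε : ℝ, 0 < l → 0 < sLo → γ ∈ Icc t' t'' → l / sLo ≤ a γ → 0 < ε →
      c l < ε - γ := by
    intro l γ ε hl hsLo0 hγ hγa hε
    have hv : 0 < l / sLo := div_pos hl hsLo0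
    obtain ⟨α2, hγα2, hα2t'', hα2v, hub⟩ := hLC (l / sLo) γ hv hγ hγa
    obtain ⟨s₁, hs₁Lo, hs₁Hi, hs₁⟩ := hQsmall ε hε
    have hs₁pos : 0 < s₁ := lt_of_le_of_lt hsLo hs₁Lo
    have h1 : l / s₁ < a α2 := by
      rw [hα2v]
      exact div_lt_div_of_pos_left hl hsLo0 hs₁Lo
    have hα2Icc : α2 ∈ Icc t' t'' := ⟨le_trans hγ.1 hγα2, hα2t''.le⟩
    have hcw : ContinuousWithinAt a (Icc t' t'') α2 := ha_cont.continuousWithinAt hα2Icc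
    have hnb : (𝓝[Ioc α2 t''] α2).NeBot := by
      rw [← mem_closure_iff_nhdsWithin_neBot, closure_Ioc hα2t''.ne]
      exact ⟨le_rfl, hα2t''.le⟩
    have hmono : 𝓝[Ioc α2 t''] α2 ≤ 𝓝[Icc t' t''] α2 :=
      nhdsWithin_mono _ (fun β hβ => ⟨le_trans hα2Icc.1 hβ.1.le, hβ.2⟩)
    have hev : ∀ᶠ β in 𝓝[Ioc α2 t''] α2, l / s₁ < a β := hmono (hcw (Ioi_mem_nhds h1))
    obtain ⟨β, hβa, hβmem⟩ := (hev.and eventually_mem_nhdsWithin).exists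
    have hβapos : 0 < a β := lt_trans (div_pos hl hs₁pos) hβa
    have hβt'' : β < t'' := by
      refine lt_of_le_of_ne hβmem.2 ?_
      intro h; rw [h, ha_t''] at hβapos; exact lt_irrefl _ hβapos
    have hβIoo : β ∈ Ioo t' t'' := ⟨lt_of_le_of_lt hα2Icc.1 hβmem.1, hβt''⟩
    have hβa2 : a β < l / sLo := hub β hβmem.1 hβmem.2
    have hβ1 : sLo < l / a β := by
      rw [lt_div_iff₀ hβapos]
      rw [lt_div_iff₀ hsLo0] at hβa2
      · linarith [mul_comm sLo (a β), mul_comm (a β) sLo]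
    have hβ2 : l / a β < s₁ := by
      rw [div_lt_iff₀ hβapos]
      rw [div_lt_iff₀ hs₁pos] at hβa
      linarith [mul_comm s₁ (a β), mul_comm (a β) s₁]
    have hβD : β ∈ Dt l := by
      apply hDsubDt
      rw [hD l]
      exact ⟨hβIoo, hβ1, hlt_mono _ s₁ hβ2.le hs₁Hi⟩
    have hQβ : Q (l / a β) < ε := hs₁ _ hβ1 hβ2
    have hle := hcLe l hl β hβD
    rw [hQh_eq _ hβ1] at hle
    have : γ ≤ β := le_trans hγα2 hβmem.1.le
    linarith
  -- ==== interior approximation of the infimum ====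
  have hEapprox : ∀ l : ℝ, 0 < l → (l:EReal) < (A:EReal) * sHi → ∀ ε : ℝ, 0 < ε →
      ∃ α, α ∈ Ioo t' t'' ∧ sLo < l / a α ∧ ((l / a α : ℝ):EReal) < sHi ∧
        Q (l / a α) - α < c l + ε := by
    intro l hl hlAS ε hε
    have h2 : sInf ((fun α => Pt l α - α) '' Dt l) < c l + ε / 4 := by
      rw [← hc l]; linarith
    obtain ⟨x, ⟨α₀, hα₀, rfl⟩, hxlt0⟩ := exists_lt_of_csInf_lt (hDtne l hl hlAS) h2
    have hxlt : Pt l α₀ - α₀ < c l + ε / 4 := hxlt0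
    obtain ⟨hveq, hα₀Icc, hα₀a, hα₀sLo, hα₀sHi⟩ := hval l hl α₀ hα₀
    rcases lt_or_ge sLo (l / a α₀) with hgt | hle
    · refine ⟨α₀, hIoo_of α₀ hα₀Icc hα₀a, hgt, hα₀sHi, ?_⟩
      rw [hveq, hQh_eq _ hgt] at hxlt
      linarith
    · -- boundary point: perturb into D l
      have hseq : l / a α₀ = sLo := le_antisymm hle hα₀sLo
      have hsLo0 : 0 < sLo := by rw [← hseq]; exact div_pos hl hα₀a
      rw [hveq, hQh_eq0 _ hle] at hxlt
      -- hxlt : 0 - α₀ < c l + ε/4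
      have hclos : α₀ ∈ closure (D l) := by
        rw [hDt l] at hα₀
        rcases hα₀ with h | h
        · exact subset_closure h
        · exact h.1
      have haeq' : a α₀ = l / sLo := by
        rw [div_eq_iff (ne_of_gt hα₀a)] at hseq
        rw [eq_div_iff (ne_of_gt hsLo0)]
        rw [hseq]; ring
      obtain ⟨s₁, hs₁Lo, hs₁Hi, hs₁⟩ := hQsmall (ε/4) (by linarith)
      have hs₁pos : 0 < s₁ := lt_of_le_of_lt hsLo hs₁Lo
      have hnb : (𝓝[D l] α₀).NeBot := mem_closure_iff_nhdsWithin_neBot.1 hclos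
      have hcw : ContinuousWithinAt a (D l) α₀ := by
        refine (ha_cont.continuousWithinAt hα₀Icc).mono ?_
        rw [hD l]; intro x hx; exact Ioo_subset_Icc_self hx.1
      have hagt : l / s₁ < a α₀ := by
        rw [haeq']
        exact div_lt_div_of_pos_left hl hsLo0 hs₁Lo
      have hev1 : ∀ᶠ β in 𝓝[D l] α₀, l / s₁ < a β := hcw (Ioi_mem_nhds hagt)
      have hev2 : ∀ᶠ β in 𝓝[D l] α₀, |β - α₀| < ε/4 := by
        have hball : Metric.ball α₀ (ε/4) ∈ 𝓝[D l] α₀ :=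
          nhdsWithin_le_nhds (Metric.ball_mem_nhds _ (by linarith))
        filter_upwards [hball] with β hβ
        rw [Metric.mem_ball, Real.dist_eq] at hβ
        exact hβ
      obtain ⟨β, hβD, hβ1, hβ2⟩ := (eventually_mem_nhdsWithin.and (hev1.and hev2)).exists
      rw [hD l] at hβD
      obtain ⟨hβIoo, hβsLo, hβsHi⟩ := hβD
      have hβapos : 0 < a β := ha_pos β hβIoo
      have hβlt : l / a β < s₁ := by
        rw [div_lt_iff₀ hβapos]
        rw [div_lt_iff₀ hs₁pos] at hβ1
        linarith [mul_comm s₁ (a β), mul_comm (a β) s₁]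
      have hQβ : Q (l / a β) < ε/4 := hs₁ _ hβsLo hβlt
      refine ⟨β, hβIoo, hβsLo, hβsHi, ?_⟩
      have hβge : α₀ - ε/4 < β := by
        have := abs_lt.1 hβ2
        linarith [this.1]
      linarith
  -- ==== upper semicontinuity ====
  have husc : ∀ l : ℝ, 0 < l → (l:EReal) < (A:EReal) * sHi → ∀ ε : ℝ, 0 < ε →
      ∀ᶠ μ in 𝓝 l, c μ < c l + ε := by
    intro l hl hlAS ε hε
    obtain ⟨α, hαIoo, hα1, hα2, hα3⟩ := hEapprox l hl hlAS (ε/2) (by linarith)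
    have hapos : 0 < a α := ha_pos α hαIoo
    have hdivcont : ContinuousAt (fun μ : ℝ => μ / a α) l :=
      continuousAt_id.div continuousAt_const (ne_of_gt hapos)
    have hQc : ContinuousAt Q (l / a α) := hQ_cont.continuousAt (hO.mem_nhds ⟨hα1, hα2⟩)
    have hcont : Tendsto (fun μ : ℝ => Q (μ / a α) - α) (𝓝 l) (𝓝 (Q (l / a α) - α)) :=
      Tendsto.sub (Tendsto.comp (g := Q) (f := fun μ : ℝ => μ / a α) hQc hdivcont)
        tendsto_const_nhds
    have hev1 : ∀ᶠ μ in 𝓝 l, Q (μ / a α) - α < c l + ε := by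
      have h1 := hcont (Iio_mem_nhds (show Q (l / a α) - α < c l + ε by linarith))
      filter_upwards [h1] with μ hμ using hμ
    have hev2 : ∀ᶠ μ in 𝓝 l, sLo < μ / a α := by
      have h1 : (fun μ : ℝ => μ / a α) ⁻¹' (Ioi sLo) ∈ 𝓝 l := hdivcont (Ioi_mem_nhds hα1)
      filter_upwards [h1] with μ hμ using hμ
    have hev3 : ∀ᶠ μ in 𝓝 l, ((μ / a α : ℝ):EReal) < sHi := by
      have hcc : ContinuousAt (fun μ : ℝ => ((μ / a α : ℝ):EReal)) l :=
        continuous_coe_real_ereal.continuousAt.comp hdivcont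
      have h1 : (fun μ : ℝ => ((μ / a α : ℝ):EReal)) ⁻¹' (Iio sHi) ∈ 𝓝 l :=
        hcc (Iio_mem_nhds hα2)
      filter_upwards [h1] with μ hμ using hμ
    have hev4 : ∀ᶠ μ in 𝓝 l, 0 < μ := eventually_gt_nhds hl
    filter_upwards [hev1, hev2, hev3, hev4] with μ h1 h2 h3 h4
    have hμD : α ∈ Dt μ := by
      apply hDsubDt
      rw [hD μ]
      exact ⟨hαIoo, h2, h3⟩
    have h5 := hcLe μ h4 α hμD
    rw [hQh_eq _ h2] at h5
    linarith
  -- ==== lower semicontinuity ====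
  have hlsc : ∀ l : ℝ, 0 < l → (l:EReal) < (A:EReal) * sHi → ∀ ε : ℝ, 0 < ε →
      ∀ᶠ μ in 𝓝 l, c l - ε < c μ := by
    intro l hl hlAS ε hε
    have hdivA : ((l/(2*A) : ℝ):EReal) < sHi := by
      rcases hcase with htop | ⟨S, hS, hSlo⟩
      · rw [htop]; exact EReal.coe_lt_top _
      · have hlAS' : l < A * S := by
          rw [hS, ← EReal.coe_mul] at hlAS
          exact EReal.coe_lt_coe_iff.1 hlAS
        have hS0 : 0 < S := lt_of_le_of_lt hsLo hSlo
        rw [hS, EReal.coe_lt_coe_iff]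
        rw [div_lt_iff₀ (by positivity)]
        nlinarith
    obtain ⟨B, hB1, hB2, hB3, hB4, hB5⟩ := hQbig (c l + t'') (l/(2*A)) hdivA
    have hl2B : 0 < l / (2*B) := by positivity
    set K := {β : ℝ | β ∈ Icc t' t'' ∧ l/(2*B) ≤ a β} with hK
    have hKclosed : IsClosed K := hclosedcap t' (l/(2*B)) le_rfl
    have hKsub : K ⊆ Icc t' t'' := fun β hβ => hβ.1
    have hKcompact : IsCompact K := isCompact_Icc.of_isClosed_subset hKclosed hKsub
    have hKam : am ∈ K := by
      refine ⟨hamIcc, ?_⟩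
      rw [hamA, div_le_iff₀ (by positivity)]
      rw [div_le_iff₀ (by positivity)] at hB1
      nlinarith
    have hKapos : ∀ β ∈ K, 0 < a β := fun β hβ => lt_of_lt_of_le hl2B hβ.2
    set ψ : ℝ × ℝ → ℝ := fun p => Qh (min (p.1 / a p.2) B) - p.2 with hψ
    set Jset := Icc (l/2) (2*l) ×ˢ K with hJset
    have hJcompact : IsCompact Jset := isCompact_Icc.prod hKcompact
    have hψcont : ContinuousOn ψ Jset := by
      intro p hp
      have hpa : 0 < a p.2 := hKapos p.2 hp.2
      have hmaps : MapsTo (Prod.snd : ℝ × ℝ → ℝ) Jset (Icc t' t'') :=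
        fun q hq => (hq.2 : q.2 ∈ K).1
      have h1 : ContinuousWithinAt (fun p : ℝ × ℝ => p.1 / a p.2) Jset p :=
        ContinuousWithinAt.div continuous_fst.continuousWithinAt
          ((ha_cont.continuousWithinAt (hp.2 : p.2 ∈ K).1).comp
            continuous_snd.continuousWithinAt hmaps) (ne_of_gt hpa)
      have h2 : ContinuousWithinAt (fun p : ℝ × ℝ => min (p.1 / a p.2) B) Jset p :=
        h1.min continuousWithinAt_const
      have h3 : ContinuousAt Qh (min (p.1 / a p.2) B) :=
        hQhCont _ (hlt_mono _ B (min_le_right _ _) hB4)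
      exact Tendsto.sub
        (Tendsto.comp (g := Qh) (f := fun p : ℝ × ℝ => min (p.1 / a p.2) B) h3 h2)
        continuous_snd.continuousWithinAt
    have hunif := hJcompact.uniformContinuousOn_of_continuous hψcont
    rw [Metric.uniformContinuousOn_iff] at hunif
    obtain ⟨δ, hδ0, hδ⟩ := hunif (ε/2) (by linarith)
    -- claim: ψ (l, ·) ≥ c l on K
    have hclaim : ∀ β, β ∈ K → c l ≤ ψ (l, β) := by
      intro β hβK
      have hapos : 0 < a β := hKapos β hβK
      have hspos : 0 < l / a β := div_pos hl hapos
      rcases le_or_gt (l / a β) sLo with hc1 | hc1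
      · have hsLo0 : 0 < sLo := lt_of_lt_of_le hspos hc1
        have hψval : ψ (l, β) = -β := by
          show Qh (min (l / a β) B) - β = -β
          rw [hQh_eq0 _ (le_trans (min_le_left _ _) hc1)]
          ring
        have hγa : l / sLo ≤ a β := by
          rw [div_le_iff₀ hsLo0]
          rw [div_le_iff₀ hapos] at hc1
          linarith [mul_comm sLo (a β), mul_comm (a β) sLo]
        rw [hψval]
        by_contra hcon
        push_neg at hcon
        have h6 := hNB l β ((c l + β)/2) hl hsLo0 hβK.1 hγa (by linarith)
        linarith
      · rcases le_or_gt (l / a β) B with hc2 | hc2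
        · have hβIoo : β ∈ Ioo t' t'' := hIoo_of β hβK.1 hapos
          have hmem : β ∈ Dt l := by
            apply hDsubDt
            rw [hD l]
            exact ⟨hβIoo, hc1, hlt_mono _ B hc2 hB4⟩
          have h6 := hcLe l hl β hmem
          have hψval : ψ (l, β) = Qh (l / a β) - β := by
            show Qh (min (l / a β) B) - β = _
            rw [min_eq_left hc2]
          rw [hψval]
          exact h6
        · have hψval : ψ (l, β) = Q B - β := by
            show Qh (min (l / a β) B) - β = _
            rw [min_eq_right hc2.le, hQh_eq _ hB2]
          have hQB : c l + t'' < Q B := hB5 B le_rfl hB4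
          rw [hψval]
          have hβt'' : β ≤ t'' := hβK.1.2
          linarith
    -- eventual bound
    have hev4 : ∀ᶠ μ in 𝓝 l, 0 < μ := eventually_gt_nhds hl
    have hev5 : ∀ᶠ (μ : ℝ) in 𝓝 l, (μ:EReal) < (A:EReal) * sHi := by
      have hcc : ContinuousAt (fun μ : ℝ => (μ:EReal)) l :=
        continuous_coe_real_ereal.continuousAt
      have h1 : ∀ᶠ μ in 𝓝 l, (fun μ : ℝ => (μ:EReal)) μ ∈ Iio ((A:EReal) * sHi) :=
        hcc.eventually_mem (Iio_mem_nhds hlAS)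
      filter_upwards [h1] with μ hμ using hμ
    have hev6 : ∀ᶠ μ in 𝓝 l, |μ - l| < min δ (l/2) := by
      have h1 : Metric.ball l (min δ (l/2)) ∈ 𝓝 l :=
        Metric.ball_mem_nhds _ (lt_min hδ0 (by linarith))
      filter_upwards [h1] with μ hμ
      rw [Metric.mem_ball, Real.dist_eq] at hμ
      exact hμ
    filter_upwards [hev4, hev5, hev6] with μ hμ0 hμAS hμd
    have hμJ : μ ∈ Icc (l/2) (2*l) := by
      have h1 := abs_lt.1 hμd
      have h2 := min_le_right δ (l/2)
      constructor <;> nlinarith [h1.1, h1.2]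
    have hμδ : |μ - l| < δ := lt_of_lt_of_le hμd (min_le_left _ _)
    rw [hc μ]
    have hstep : ∀ x ∈ ((fun α => Pt μ α - α) '' Dt μ), c l - ε/2 ≤ x := by
      rintro x ⟨α', hα', rfl⟩
      obtain ⟨hveq, hIcc, hapos', hsLo', hsHi'⟩ := hval μ hμ0 α' hα'
      show c l - ε/2 ≤ Pt μ α' - α'
      rw [hveq]
      rcases le_or_gt (μ / a α') B with hc2 | hc2
      · -- α' ∈ K; use uniform continuity
        have hs'pos : 0 < μ / a α' := div_pos hμ0 hapos'
        have hαK : α' ∈ K := by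
          refine ⟨hIcc, ?_⟩
          have h1 : μ / B ≤ a α' := by
            rw [div_le_iff₀ hB3]
            rw [div_le_iff₀ hapos'] at hc2
            linarith [mul_comm B (a α'), mul_comm (a α') B]
          have h2 : l / (2*B) ≤ μ / B := by
            rw [div_le_div_iff₀ (by positivity) hB3]
            have := hμJ.1
            nlinarith
          linarith
        have hmemμ : (μ, α') ∈ Jset := ⟨hμJ, hαK⟩
        have hmeml : (l, α') ∈ Jset :=
          ⟨(show l ∈ Icc (l/2) (2*l) from ⟨by linarith, by linarith⟩), hαK⟩
        have hdist : dist (μ, α') (l, α') < δ := by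
          rw [Prod.dist_eq]
          have h1 : dist α' α' = 0 := dist_self α'
          have h2 : dist μ l < δ := by rw [Real.dist_eq]; exact hμδ
          rw [h1]
          exact max_lt h2 hδ0
        have h3 := hδ (μ, α') hmemμ (l, α') hmeml hdist
        rw [Real.dist_eq] at h3
        have h4 := abs_lt.1 h3
        have h5 := hclaim α' hαK
        have hψμ : ψ (μ, α') = Qh (μ / a α') - α' := by
          show Qh (min (μ / a α') B) - α' = _
          rw [min_eq_left hc2]
        rw [hψμ] at h4
        obtain ⟨u, hu⟩ : ∃ u, ψ (l, α') = u := ⟨_, rfl⟩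
        obtain ⟨w, hw⟩ : ∃ w, Qh (μ / a α') = w := ⟨_, rfl⟩
        rw [hu, hw] at h4
        rw [hu] at h5
        rw [hw]
        linarith [h4.1, h5]
      · -- far out: value is big
        have hQs' : c l + t'' < Q (μ / a α') := hB5 _ hc2.le hsHi'
        rw [hQh_eq _ (lt_trans hB2 hc2)]
        have h6 : α' ≤ t'' := hIcc.2
        linarith
    have h7 := le_csInf (by
      obtain ⟨α₀, hα₀⟩ := hDne μ hμ0 hμAS
      exact ⟨_, ⟨α₀, hDsubDt μ α₀ hα₀, rfl⟩⟩) hstep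
    linarith
  -- ==== c < 0 for small l ====
  have hampos : 0 < am := lt_of_le_of_lt ht' hamIoo.1
  have hsmall : ∃ δ₀ : ℝ, 0 < δ₀ ∧ ∀ l : ℝ, 0 < l → l < δ₀ →
      ((l:EReal) < (A:EReal) * sHi ∧ c l < 0) := by
    by_cases hsLo0 : sLo = 0
    · obtain ⟨s₁, hs₁Lo, hs₁Hi, hs₁⟩ := hQsmall am hampos
      have hs₁pos : 0 < s₁ := lt_of_le_of_lt hsLo hs₁Lo
      refine ⟨A * s₁, by positivity, ?_⟩
      intro l hl hlδ
      have hlA : l / A < s₁ := by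
        rw [div_lt_iff₀ hA0]
        linarith [mul_comm s₁ A]
      have hIl : (l:EReal) < (A:EReal) * sHi := by
        rcases hcase with htop | ⟨S, hS, hSlo⟩
        · rw [htop, EReal.mul_top_of_pos (by exact_mod_cast hA0)]
          exact EReal.coe_lt_top _
        · have hs₁S : s₁ < S := by
            rw [hS, EReal.coe_lt_coe_iff] at hs₁Hi; exact hs₁Hi
          rw [hS, ← EReal.coe_mul, EReal.coe_lt_coe_iff]
          nlinarith
      refine ⟨hIl, ?_⟩
      have hsLolA : sLo < l / A := by rw [hsLo0]; positivity
      have hmem : am ∈ Dt l := by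
        apply hDsubDt
        rw [hD l]
        refine ⟨hamIoo, ?_, ?_⟩
        · rw [hamA]; exact hsLolA
        · rw [hamA]; exact hlt_mono _ s₁ hlA.le hs₁Hi
      have h1 := hcLe l hl am hmem
      rw [hamA, hQh_eq _ hsLolA] at h1
      have h2 := hs₁ (l / A) hsLolA hlA
      linarith
    · have hsLo0' : 0 < sLo := lt_of_le_of_ne hsLo (Ne.symm hsLo0)
      refine ⟨A * sLo, by positivity, ?_⟩
      intro l hl hlδ
      have hIl : (l:EReal) < (A:EReal) * sHi := by
        rcases hcase with htop | ⟨S, hS, hSlo⟩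
        · rw [htop, EReal.mul_top_of_pos (by exact_mod_cast hA0)]
          exact EReal.coe_lt_top _
        · rw [hS, ← EReal.coe_mul, EReal.coe_lt_coe_iff]
          nlinarith
      refine ⟨hIl, ?_⟩
      have hγa : l / sLo ≤ a am := by
        rw [hamA, div_le_iff₀ hsLo0']
        linarith [mul_comm sLo A]
      have h1 := hNB l am am hl hsLo0' hamIcc hγa hampos
      linarith
  -- ==== c ≥ 1 for large l ====
  obtain ⟨B₁, hB₁1, hB₁2, hB₁3, hB₁4, hB₁5⟩ := hQbig (t'' + 1) sLo hs
  have hbig : ∀ l : ℝ, 0 < l → (l:EReal) < (A:EReal) * sHi → A * B₁ < l → 1 ≤ c l := by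
    intro l h0 hAS' hABl
    rw [hc l]
    refine le_csInf (hDtne l h0 hAS') ?_
    rintro x ⟨α', hα', rfl⟩
    obtain ⟨hveq, hIcc, ha', hsle, hslt⟩ := hval l h0 α' hα'
    have haA' : a α' ≤ A := haA α' hIcc
    have h1 : B₁ < l / a α' := by
      have h2 : B₁ < l / A := by
        rw [lt_div_iff₀ hA0]
        linarith [mul_comm B₁ A]
      have h3 : l / A ≤ l / a α' := div_le_div_of_nonneg_left h0.le ha' haA'
      linarith
    show 1 ≤ Pt l α' - α'
    rw [hveq, hQh_eq _ (lt_trans hB₁2 h1)]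
    have h4 := hB₁5 _ h1.le hslt
    have h5 : α' ≤ t'' := hIcc.2
    linarith
  have hexI : ∃ l₁ : ℝ, 0 < l₁ ∧ (l₁:EReal) < (A:EReal) * sHi ∧ A * B₁ < l₁ := by
    rcases hcase with htop | ⟨S, hS, hSlo⟩
    · have hAB0 : 0 < A * B₁ := mul_pos hA0 hB₁3
      refine ⟨A * B₁ + 1, by linarith, ?_, by linarith⟩
      rw [htop, EReal.mul_top_of_pos (by exact_mod_cast hA0)]
      exact EReal.coe_lt_top _
    · have hB₁S : B₁ < S := by
        rw [hS, EReal.coe_lt_coe_iff] at hB₁4; exact hB₁4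
      have hABS : A * B₁ < A * S := mul_lt_mul_of_pos_left hB₁S hA0
      have hAB0 : 0 < A * B₁ := mul_pos hA0 hB₁3
      refine ⟨(A * B₁ + A * S)/2, by linarith, ?_, by linarith⟩
      rw [hS, ← EReal.coe_mul, EReal.coe_lt_coe_iff]
      linarith
  obtain ⟨δ₀, hδ₀0, hδ₀⟩ := hsmall
  obtain ⟨l₁, hl₁0, hl₁AS, hl₁B⟩ := hexI
  -- ==== lam₀ : least zero ====
  set N₀ := {μ : ℝ | (0 < μ ∧ (μ:EReal) < (A:EReal) * sHi) ∧
      ∀ x : ℝ, 0 < x → x ≤ μ → c x < 0} with hN₀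
  have hN₀mem : δ₀/2 ∈ N₀ := by
    refine ⟨⟨by linarith, (hδ₀ (δ₀/2) (by linarith) (by linarith)).1⟩, ?_⟩
    intro x hx hxle
    exact (hδ₀ x hx (by linarith)).2
  have hN₀ub : ∀ μ ∈ N₀, μ ≤ A * B₁ := by
    intro μ hμ
    by_contra h
    push_neg at h
    have h1 := hbig μ hμ.1.1 hμ.1.2 h
    have h2 := hμ.2 μ hμ.1.1 le_rfl
    linarith
  have hN₀bdd : BddAbove N₀ := ⟨A * B₁, hN₀ub⟩
  set lam₀ := sSup N₀ with hlam₀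
  have hlam₀pos : 0 < lam₀ := lt_of_lt_of_le (by linarith) (le_csSup hN₀bdd hN₀mem)
  have hlam₀le : lam₀ ≤ A * B₁ := csSup_le ⟨_, hN₀mem⟩ hN₀ub
  have hlam₀AS : (lam₀:EReal) < (A:EReal) * sHi :=
    lt_of_lt_of_le (EReal.coe_lt_coe_iff.2 (lt_of_le_of_lt hlam₀le hl₁B))
      hl₁AS.le
  have hneg : ∀ x : ℝ, 0 < x → x < lam₀ → c x < 0 := by
    intro x hx hxl
    obtain ⟨μ, hμN, hxμ⟩ := exists_lt_of_lt_csSup ⟨_, hN₀mem⟩ hxl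
    exact hμN.2 x hx hxμ.le
  have hclam₀ : c lam₀ = 0 := by
    rcases lt_trichotomy (c lam₀) 0 with hlt | heq | hgt
    · exfalso
      have hev := husc lam₀ hlam₀pos hlam₀AS (-(c lam₀)) (by linarith)
      have hev2 : ∀ᶠ (μ : ℝ) in 𝓝 lam₀, 0 < μ := eventually_gt_nhds hlam₀pos
      have hev3 : ∀ᶠ (μ : ℝ) in 𝓝 lam₀, (μ:EReal) < (A:EReal) * sHi := by
        have hcc : ContinuousAt (fun μ : ℝ => (μ:EReal)) lam₀ :=
          continuous_coe_real_ereal.continuousAt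
        have h1 : ∀ᶠ μ in 𝓝 lam₀, (fun μ : ℝ => (μ:EReal)) μ ∈ Iio ((A:EReal) * sHi) :=
          hcc.eventually_mem (Iio_mem_nhds hlam₀AS)
        filter_upwards [h1] with μ hμ using hμ
      obtain ⟨δ', hδ'0, hδ'⟩ := Metric.eventually_nhds_iff.1 ((hev.and hev2).and hev3)
      have hμstar : lam₀ + δ'/2 ∈ N₀ := by
        have hself := hδ' (y := lam₀ + δ'/2)
          (by rw [Real.dist_eq]; rw [abs_lt]; constructor <;> linarith)
        refine ⟨⟨by linarith, hself.2⟩, ?_⟩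
        intro x hx hxle
        rcases lt_or_ge x lam₀ with h | h
        · exact hneg x hx h
        · have h1 := hδ' (y := x)
            (by rw [Real.dist_eq]; rw [abs_lt]; constructor <;> linarith)
          have h2 := h1.1.1
          linarith
      have := le_csSup hN₀bdd hμstar
      linarith
    · exact heq
    · exfalso
      have hev := hlsc lam₀ hlam₀pos hlam₀AS (c lam₀) hgt
      obtain ⟨δ', hδ'0, hδ'⟩ := Metric.eventually_nhds_iff.1 hev
      set x := max (lam₀ - δ'/2) (lam₀/2) with hx
      have hx0 : 0 < x := lt_of_lt_of_le (by linarith) (le_max_right _ _)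
      have hxlt : x < lam₀ := max_lt (by linarith) (by linarith)
      have hdist : dist x lam₀ < δ' := by
        rw [Real.dist_eq, abs_lt]
        constructor
        · have := le_max_left (lam₀ - δ'/2) (lam₀/2); linarith
        · linarith
      have h1 := hδ' hdist
      have h2 := hneg x hx0 hxlt
      linarith
  -- ==== lamt₀ : greatest zero ====
  set N₁ := {μ : ℝ | (0 < μ ∧ (μ:EReal) < (A:EReal) * sHi) ∧
      ∀ x : ℝ, μ ≤ x → 0 < x → (x:EReal) < (A:EReal) * sHi → 0 < c x} with hN₁
  have hl₁N₁ : l₁ ∈ N₁ := by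
    refine ⟨⟨hl₁0, hl₁AS⟩, ?_⟩
    intro x hx h0 hAS'
    have := hbig x h0 hAS' (lt_of_lt_of_le hl₁B hx)
    linarith
  have hN₁lb : ∀ μ ∈ N₁, lam₀ ≤ μ := by
    intro μ hμ
    by_contra h
    push_neg at h
    have h1 := hμ.2 lam₀ h.le hlam₀pos hlam₀AS
    rw [hclam₀] at h1
    exact lt_irrefl _ h1
  have hN₁bdd : BddBelow N₁ := ⟨lam₀, hN₁lb⟩
  set lamt₀ := sInf N₁ with hlamt₀
  have hlam₀le₁ : lam₀ ≤ lamt₀ := le_csInf ⟨_, hl₁N₁⟩ hN₁lb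
  have hlamt₀pos : 0 < lamt₀ := lt_of_lt_of_le hlam₀pos hlam₀le₁
  have hlamt₀le : lamt₀ ≤ l₁ := csInf_le hN₁bdd hl₁N₁
  have hlamt₀AS : (lamt₀:EReal) < (A:EReal) * sHi :=
    lt_of_le_of_lt (EReal.coe_le_coe_iff.2 hlamt₀le) hl₁AS
  have hpos : ∀ x : ℝ, lamt₀ < x → 0 < x → (x:EReal) < (A:EReal) * sHi → 0 < c x := by
    intro x h1 h2 h3
    obtain ⟨μ, hμN, hμx⟩ := exists_lt_of_csInf_lt ⟨_, hl₁N₁⟩ h1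
    exact hμN.2 x hμx.le h2 h3
  have hclamt₀ : c lamt₀ = 0 := by
    rcases lt_trichotomy (c lamt₀) 0 with hlt | heq | hgt
    · exfalso
      have hev := husc lamt₀ hlamt₀pos hlamt₀AS (-(c lamt₀)) (by linarith)
      have hev3 : ∀ᶠ (μ : ℝ) in 𝓝 lamt₀, (μ:EReal) < (A:EReal) * sHi := by
        have hcc : ContinuousAt (fun μ : ℝ => (μ:EReal)) lamt₀ :=
          continuous_coe_real_ereal.continuousAt
        have h1 : ∀ᶠ μ in 𝓝 lamt₀, (fun μ : ℝ => (μ:EReal)) μ ∈ Iio ((A:EReal) * sHi) :=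
          hcc.eventually_mem (Iio_mem_nhds hlamt₀AS)
        filter_upwards [h1] with μ hμ using hμ
      obtain ⟨δ', hδ'0, hδ'⟩ := Metric.eventually_nhds_iff.1 (hev.and hev3)
      have h1 := hδ' (y := lamt₀ + δ'/2)
        (by rw [Real.dist_eq, abs_lt]; constructor <;> linarith)
      have h2 := hpos (lamt₀ + δ'/2) (by linarith) (by linarith) h1.2
      linarith [h1.1]
    · exact heq
    · exfalso
      have hev := hlsc lamt₀ hlamt₀pos hlamt₀AS (c lamt₀) hgt
      obtain ⟨δ', hδ'0, hδ'⟩ := Metric.eventually_nhds_iff.1 hev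
      set μ₁ := max (lamt₀ - δ'/2) (lamt₀/2) with hμ₁
      have hμ₁0 : 0 < μ₁ := lt_of_lt_of_le (by linarith) (le_max_right _ _)
      have hμ₁lt : μ₁ < lamt₀ := max_lt (by linarith) (by linarith)
      have hμ₁AS : (μ₁:EReal) < (A:EReal) * sHi :=
        lt_trans (EReal.coe_lt_coe_iff.2 hμ₁lt) hlamt₀AS
      have hμ₁N : μ₁ ∈ N₁ := by
        refine ⟨⟨hμ₁0, hμ₁AS⟩, ?_⟩
        intro x hx h0 hAS'
        rcases le_or_gt x lamt₀ with h | h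
        · have hdist : dist x lamt₀ < δ' := by
            rw [Real.dist_eq, abs_lt]
            have := le_max_left (lamt₀ - δ'/2) (lamt₀/2)
            constructor <;> linarith
          have h1 := hδ' hdist
          linarith
        · exact hpos x h h0 hAS'
      have := csInf_le hN₁bdd hμ₁N
      linarith
  -- ==== two fixed points for l < lam₀ ====
  have hfix : ∀ l : ℝ, 0 < l → l < lam₀ →
      ∃ α₁ α₂ : ℝ, α₁ ∈ D l ∧ α₂ ∈ D l ∧ α₁ < α₂ ∧
        Q (l / a α₁) = α₁ ∧ Q (l / a α₂) = α₂ := by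
    intro l hl0 hllam
    have hlAS : (l:EReal) < (A:EReal) * sHi :=
      lt_trans (EReal.coe_lt_coe_iff.2 hllam) hlam₀AS
    have hcneg : c l < 0 := hneg l hl0 hllam
    obtain ⟨ab, habIoo, hab1, hab2, hab3⟩ := hEapprox l hl0 hlAS (-(c l)) (by linarith)
    have habneg : Q (l / a ab) - ab < 0 := by linarith
    obtain ⟨B, hB1, hB2, hB3, hB4, hB5⟩ := hQbig t'' sLo hs
    have habt'' : ab < t'' := habIoo.2
    have hlB : 0 < l / B := div_pos hl0 hB3
    -- ===== LEFT =====
    set G := {β : ℝ | β ∈ Icc t' ab ∧ (β = t' ∨ ¬ ((l / a β : ℝ):EReal) < sHi)} with hG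
    have hGne : t' ∈ G := ⟨⟨le_rfl, habIoo.1.le⟩, Or.inl rfl⟩
    have hGbdd : BddAbove G := ⟨ab, fun β hβ => hβ.1.2⟩
    have hGsubIcc : G ⊆ Icc t' ab := fun β hβ => hβ.1
    have hGclosed : IsClosed G := by
      refine isClosed_of_closure_subset ?_
      intro x hx
      have hxIcc : x ∈ Icc t' ab := closure_minimal hGsubIcc isClosed_Icc hx
      refine ⟨hxIcc, ?_⟩
      rcases eq_or_ne x t' with h | hxt'
      · exact Or.inl h
      · right
        have hxt'lt : t' < x := lt_of_le_of_ne hxIcc.1 (Ne.symm hxt')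
        have hx2 : x ∈ closure (G \ {t'}) := by
          have hsub2 : closure G ⊆ closure ({t'} : Set ℝ) ∪ closure (G \ {t'}) := by
            rw [← closure_union]
            apply closure_mono
            intro y hy
            by_cases h' : y = t'
            · exact Or.inl (by simp [h'])
            · exact Or.inr ⟨hy, h'⟩
          rcases hsub2 hx with h' | h'
          · rw [closure_singleton] at h'; exact absurd h' hxt'
          · exact h'
        have hnb : (𝓝[G \ {t'}] x).NeBot := mem_closure_iff_nhdsWithin_neBot.1 hx2
        have hxIoo : x ∈ Ioo t' t'' := ⟨hxt'lt, lt_of_le_of_lt hxIcc.2 habt''⟩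
        have hapos : 0 < a x := ha_pos x hxIoo
        have hxIcc2 : x ∈ Icc t' t'' := Ioo_subset_Icc_self hxIoo
        have hsubIcc2 : G \ {t'} ⊆ Icc t' t'' :=
          fun β hβ => ⟨hβ.1.1.1, le_trans hβ.1.1.2 habt''.le⟩
        have hcw0 : ContinuousWithinAt a (G \ {t'}) x :=
          (ha_cont.continuousWithinAt hxIcc2).mono hsubIcc2
        have h1 : ContinuousWithinAt (fun β => l / a β) (G \ {t'}) x :=
          ContinuousWithinAt.div continuousWithinAt_const hcw0 (ne_of_gt hapos)
        have hcw : ContinuousWithinAt (fun β => ((l / a β : ℝ):EReal)) (G \ {t'}) x :=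
          Tendsto.comp (g := fun s : ℝ => (s:EReal)) (f := fun β => l / a β)
            continuous_coe_real_ereal.continuousAt h1
        have hev : ∀ᶠ β in 𝓝[G \ {t'}] x, sHi ≤ ((l / a β : ℝ):EReal) := by
          filter_upwards [eventually_mem_nhdsWithin] with β hβ
          exact not_lt.1 (hβ.1.2.resolve_left hβ.2)
        exact not_lt.2 (ge_of_tendsto hcw hev)
    set st := sSup G with hst
    have hstG : st ∈ G := hGclosed.csSup_mem ⟨_, hGne⟩ hGbdd
    have hstab : st < ab := by
      refine lt_of_le_of_ne hstG.1.2 ?_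
      intro h
      rcases hstG.2 with h' | h'
      · rw [h] at h'; exact absurd h' (ne_of_gt habIoo.1)
      · rw [h] at h'; exact h' hab2
    have hnotG : ∀ β, st < β → β ≤ ab → (t' < β ∧ ((l / a β : ℝ):EReal) < sHi) := by
      intro β h1 h2
      have hβnG : β ∉ G := fun h => absurd (le_csSup hGbdd h) (not_le.2 h1)
      have hβIcc : β ∈ Icc t' ab := ⟨le_trans hstG.1.1 h1.le, h2⟩
      constructor
      · rcases eq_or_ne β t' with h' | h'
        · exact absurd (⟨hβIcc, Or.inl h'⟩ : β ∈ G) hβnG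
        · exact lt_of_le_of_ne hβIcc.1 (Ne.symm h')
      · by_contra h'
        exact hβnG ⟨hβIcc, Or.inr h'⟩
    have hstB : a st < l / B := by
      rcases hstG.2 with h | h
      · rw [h, ha_t']; exact hlB
      · have hstt' : st ≠ t' := by
          intro h''
          apply h
          rw [h'', ha_t', div_zero]
          exact hcoe0sHi
        have hstIoo : st ∈ Ioo t' t'' :=
          ⟨lt_of_le_of_ne hstG.1.1 (Ne.symm hstt'), lt_of_le_of_lt hstG.1.2 habt''⟩
        have hapos : 0 < a st := ha_pos st hstIoo
        have h2 : B < l / a st := EReal.coe_lt_coe_iff.1 (lt_of_lt_of_le hB4 (not_lt.1 h))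
        rw [lt_div_iff₀ hB3]
        rw [lt_div_iff₀ hapos] at h2
        linarith [mul_comm B (a st), mul_comm (a st) B]
    have hnbst : (𝓝[Ioo st ab] st).NeBot := by
      rw [← mem_closure_iff_nhdsWithin_neBot, closure_Ioo (ne_of_lt hstab)]
      exact ⟨le_rfl, hstab.le⟩
    have hstIcc : st ∈ Icc t' t'' := ⟨hstG.1.1, le_trans hstG.1.2 habt''.le⟩
    have hcwst : ContinuousWithinAt a (Ioo st ab) st :=
      (ha_cont.continuousWithinAt hstIcc).mono
        (fun β hβ => ⟨le_trans hstIcc.1 hβ.1.le, le_trans hβ.2.le habt''.le⟩)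
    have hev0 : ∀ᶠ β in 𝓝[Ioo st ab] st, a β < l / B := hcwst (Iio_mem_nhds hstB)
    obtain ⟨β₀, hβ₀a, hβ₀mem⟩ := (hev0.and eventually_mem_nhdsWithin).exists
    have hβ₀p := hnotG β₀ hβ₀mem.1 hβ₀mem.2.le
    have hβ₀Ioo : β₀ ∈ Ioo t' t'' := ⟨hβ₀p.1, lt_trans hβ₀mem.2 habt''⟩
    have hβ₀apos : 0 < a β₀ := ha_pos _ hβ₀Ioo
    have hβ₀B : B < l / a β₀ := by
      rw [lt_div_iff₀ hβ₀apos]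
      rw [lt_div_iff₀ hB3] at hβ₀a
      linarith [mul_comm B (a β₀), mul_comm (a β₀) B]
    have hQβ₀ : t'' < Q (l / a β₀) := hB5 _ hβ₀B.le hβ₀p.2
    have hsubIoo : Icc β₀ ab ⊆ Ioo t' t'' :=
      fun β hβ => ⟨lt_of_lt_of_le hβ₀p.1 hβ.1, lt_of_le_of_lt hβ.2 habt''⟩
    have hsubsHi : ∀ β ∈ Icc β₀ ab, ((l / a β : ℝ):EReal) < sHi :=
      fun β hβ => (hnotG β (lt_of_lt_of_le hβ₀mem.1 hβ.1) hβ.2).2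
    have hφcont : ContinuousOn (fun β => Qh (l / a β) - β) (Icc β₀ ab) := by
      intro β hβ
      have h1 : ContinuousWithinAt (fun β => l / a β) (Icc β₀ ab) β :=
        ContinuousWithinAt.div continuousWithinAt_const
          ((ha_cont.continuousWithinAt (Ioo_subset_Icc_self (hsubIoo hβ))).mono
            (fun x hx => Ioo_subset_Icc_self (hsubIoo hx)))
          (ne_of_gt (ha_pos β (hsubIoo hβ)))
      have h3 : ContinuousAt Qh (l / a β) := hQhCont _ (hsubsHi β hβ)
      exact Tendsto.sub (Tendsto.comp (g := Qh) (f := fun β => l / a β) h3 h1)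
        continuousWithinAt_id
    have hφβ₀ : 0 < Qh (l / a β₀) - β₀ := by
      rw [hQh_eq _ (lt_trans hB2 hβ₀B)]
      linarith [hβ₀Ioo.2]
    have hφab : Qh (l / a ab) - ab < 0 := by
      rw [hQh_eq _ hab1]; exact habneg
    have h0mem : (0:ℝ) ∈ Icc (Qh (l / a ab) - ab) (Qh (l / a β₀) - β₀) := ⟨hφab.le, hφβ₀.le⟩
    obtain ⟨α₁, hα₁mem, hα₁eq⟩ := intermediate_value_Icc' hβ₀mem.2.le hφcont h0mem
    have hα₁eq' : Qh (l / a α₁) - α₁ = 0 := hα₁eq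
    have hα₁ab : α₁ < ab := by
      refine lt_of_le_of_ne hα₁mem.2 ?_
      intro h
      rw [h] at hα₁eq'
      linarith
    have hα₁pos : 0 < α₁ := lt_of_le_of_lt ht' (lt_of_lt_of_le hβ₀p.1 hα₁mem.1)
    have hα₁sLo : sLo < l / a α₁ := by
      by_contra h
      push_neg at h
      rw [hQh_eq0 _ h] at hα₁eq'
      linarith
    have hα₁Q : Q (l / a α₁) = α₁ := by
      rw [hQh_eq _ hα₁sLo] at hα₁eq'
      linarith
    have hα₁D : α₁ ∈ D l := by
      rw [hD l]
      exact ⟨hsubIoo hα₁mem, hα₁sLo, hsubsHi _ hα₁mem⟩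
    -- ===== RIGHT =====
    set G' := {β : ℝ | β ∈ Icc ab t'' ∧ (β = t'' ∨ ¬ ((l / a β : ℝ):EReal) < sHi)} with hG'
    have hG'ne : t'' ∈ G' := ⟨⟨habt''.le, le_rfl⟩, Or.inl rfl⟩
    have hG'bdd : BddBelow G' := ⟨ab, fun β hβ => hβ.1.1⟩
    have hG'sub : G' ⊆ Icc ab t'' := fun β hβ => hβ.1
    have hG'closed : IsClosed G' := by
      refine isClosed_of_closure_subset ?_
      intro x hx
      have hxIcc : x ∈ Icc ab t'' := closure_minimal hG'sub isClosed_Icc hx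
      refine ⟨hxIcc, ?_⟩
      rcases eq_or_ne x t'' with h | hxt''
      · exact Or.inl h
      · right
        have hxlt : x < t'' := lt_of_le_of_ne hxIcc.2 hxt''
        have hx2 : x ∈ closure (G' \ {t''}) := by
          have hsub2 : closure G' ⊆ closure ({t''} : Set ℝ) ∪ closure (G' \ {t''}) := by
            rw [← closure_union]
            apply closure_mono
            intro y hy
            by_cases h' : y = t''
            · exact Or.inl (by simp [h'])
            · exact Or.inr ⟨hy, h'⟩
          rcases hsub2 hx with h' | h'
          · rw [closure_singleton] at h'; exact absurd h' hxt''
          · exact h'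
        have hnb : (𝓝[G' \ {t''}] x).NeBot := mem_closure_iff_nhdsWithin_neBot.1 hx2
        have hxIoo : x ∈ Ioo t' t'' := ⟨lt_of_lt_of_le habIoo.1 hxIcc.1, hxlt⟩
        have hapos : 0 < a x := ha_pos x hxIoo
        have hxIcc2 : x ∈ Icc t' t'' := Ioo_subset_Icc_self hxIoo
        have hsubIcc2 : G' \ {t''} ⊆ Icc t' t'' :=
          fun β hβ => ⟨le_trans habIoo.1.le hβ.1.1.1, hβ.1.1.2⟩
        have hcw0 : ContinuousWithinAt a (G' \ {t''}) x :=
          (ha_cont.continuousWithinAt hxIcc2).mono hsubIcc2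
        have h1 : ContinuousWithinAt (fun β => l / a β) (G' \ {t''}) x :=
          ContinuousWithinAt.div continuousWithinAt_const hcw0 (ne_of_gt hapos)
        have hcw : ContinuousWithinAt (fun β => ((l / a β : ℝ):EReal)) (G' \ {t''}) x :=
          Tendsto.comp (g := fun s : ℝ => (s:EReal)) (f := fun β => l / a β)
            continuous_coe_real_ereal.continuousAt h1
        have hev : ∀ᶠ β in 𝓝[G' \ {t''}] x, sHi ≤ ((l / a β : ℝ):EReal) := by
          filter_upwards [eventually_mem_nhdsWithin] with β hβ
          exact not_lt.1 (hβ.1.2.resolve_left hβ.2)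
        exact not_lt.2 (ge_of_tendsto hcw hev)
    set st' := sInf G' with hst'
    have hst'G : st' ∈ G' := hG'closed.csInf_mem ⟨_, hG'ne⟩ hG'bdd
    have habst' : ab < st' := by
      refine lt_of_le_of_ne hst'G.1.1 ?_
      intro h
      rcases hst'G.2 with h' | h'
      · rw [← h] at h'; exact absurd h' (ne_of_lt habt'')
      · rw [← h] at h'; exact h' hab2
    have hnotG' : ∀ β, ab ≤ β → β < st' → (β < t'' ∧ ((l / a β : ℝ):EReal) < sHi) := by
      intro β h1 h2
      have hβnG : β ∉ G' := fun h => absurd (csInf_le hG'bdd h) (not_le.2 h2)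
      have hβIcc : β ∈ Icc ab t'' := ⟨h1, le_trans h2.le hst'G.1.2⟩
      constructor
      · rcases eq_or_ne β t'' with h' | h'
        · exact absurd (⟨hβIcc, Or.inl h'⟩ : β ∈ G') hβnG
        · exact lt_of_le_of_ne hβIcc.2 h'
      · by_contra h'
        exact hβnG ⟨hβIcc, Or.inr h'⟩
    have hst'B : a st' < l / B := by
      rcases hst'G.2 with h | h
      · rw [h, ha_t'']; exact hlB
      · have hstt'' : st' ≠ t'' := by
          intro h''
          apply h
          rw [h'', ha_t'', div_zero]
          exact hcoe0sHi
        have hstIoo : st' ∈ Ioo t' t'' :=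
          ⟨lt_of_lt_of_le habIoo.1 hst'G.1.1, lt_of_le_of_ne hst'G.1.2 hstt''⟩
        have hapos : 0 < a st' := ha_pos st' hstIoo
        have h2 : B < l / a st' := EReal.coe_lt_coe_iff.1 (lt_of_lt_of_le hB4 (not_lt.1 h))
        rw [lt_div_iff₀ hB3]
        rw [lt_div_iff₀ hapos] at h2
        linarith [mul_comm B (a st'), mul_comm (a st') B]
    have hnbst' : (𝓝[Ioo ab st'] st').NeBot := by
      rw [← mem_closure_iff_nhdsWithin_neBot, closure_Ioo (ne_of_lt habst')]
      exact ⟨habst'.le, le_rfl⟩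
    have hst'Icc : st' ∈ Icc t' t'' := ⟨le_trans habIoo.1.le hst'G.1.1, hst'G.1.2⟩
    have hcwst' : ContinuousWithinAt a (Ioo ab st') st' :=
      (ha_cont.continuousWithinAt hst'Icc).mono
        (fun β hβ => ⟨le_trans habIoo.1.le hβ.1.le, le_trans hβ.2.le hst'Icc.2⟩)
    have hev0' : ∀ᶠ β in 𝓝[Ioo ab st'] st', a β < l / B := hcwst' (Iio_mem_nhds hst'B)
    obtain ⟨β₁, hβ₁a, hβ₁mem⟩ := (hev0'.and eventually_mem_nhdsWithin).exists
    have hβ₁p := hnotG' β₁ hβ₁mem.1.le hβ₁mem.2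
    have hβ₁Ioo : β₁ ∈ Ioo t' t'' := ⟨lt_trans habIoo.1 hβ₁mem.1, hβ₁p.1⟩
    have hβ₁apos : 0 < a β₁ := ha_pos _ hβ₁Ioo
    have hβ₁B : B < l / a β₁ := by
      rw [lt_div_iff₀ hβ₁apos]
      rw [lt_div_iff₀ hB3] at hβ₁a
      linarith [mul_comm B (a β₁), mul_comm (a β₁) B]
    have hQβ₁ : t'' < Q (l / a β₁) := hB5 _ hβ₁B.le hβ₁p.2
    have hsubIoo' : Icc ab β₁ ⊆ Ioo t' t'' :=
      fun β hβ => ⟨lt_of_lt_of_le habIoo.1 hβ.1, lt_of_le_of_lt hβ.2 hβ₁p.1⟩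
    have hsubsHi' : ∀ β ∈ Icc ab β₁, ((l / a β : ℝ):EReal) < sHi :=
      fun β hβ => (hnotG' β hβ.1 (lt_of_le_of_lt hβ.2 hβ₁mem.2)).2
    have hφcont' : ContinuousOn (fun β => Qh (l / a β) - β) (Icc ab β₁) := by
      intro β hβ
      have h1 : ContinuousWithinAt (fun β => l / a β) (Icc ab β₁) β :=
        ContinuousWithinAt.div continuousWithinAt_const
          ((ha_cont.continuousWithinAt (Ioo_subset_Icc_self (hsubIoo' hβ))).mono
            (fun x hx => Ioo_subset_Icc_self (hsubIoo' hx)))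
          (ne_of_gt (ha_pos β (hsubIoo' hβ)))
      have h3 : ContinuousAt Qh (l / a β) := hQhCont _ (hsubsHi' β hβ)
      exact Tendsto.sub (Tendsto.comp (g := Qh) (f := fun β => l / a β) h3 h1)
        continuousWithinAt_id
    have hφβ₁ : 0 < Qh (l / a β₁) - β₁ := by
      rw [hQh_eq _ (lt_trans hB2 hβ₁B)]
      linarith [hβ₁Ioo.2]
    have h0mem' : (0:ℝ) ∈ Icc (Qh (l / a ab) - ab) (Qh (l / a β₁) - β₁) := ⟨hφab.le, hφβ₁.le⟩
    obtain ⟨α₂, hα₂mem, hα₂eq⟩ := intermediate_value_Icc hβ₁mem.1.le hφcont' h0mem'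
    have hα₂eq' : Qh (l / a α₂) - α₂ = 0 := hα₂eq
    have hα₂ab : ab < α₂ := by
      refine lt_of_le_of_ne hα₂mem.1 ?_
      intro h
      rw [← h] at hα₂eq'
      linarith
    have hα₂pos : 0 < α₂ := lt_of_le_of_lt ht' (lt_trans habIoo.1 hα₂ab)
    have hα₂sLo : sLo < l / a α₂ := by
      by_contra h
      push_neg at h
      rw [hQh_eq0 _ h] at hα₂eq'
      linarith
    have hα₂Q : Q (l / a α₂) = α₂ := by
      rw [hQh_eq _ hα₂sLo] at hα₂eq'
      linarith
    have hα₂D : α₂ ∈ D l := by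
      rw [hD l]
      exact ⟨hsubIoo' hα₂mem, hα₂sLo, hsubsHi' _ hα₂mem⟩
    exact ⟨α₁, α₂, hα₁D, hα₂D, lt_trans hα₁ab hα₂ab, hα₁Q, hα₂Q⟩
  -- ==== no fixed points for l > lamt₀ ====
  have hnofix : ∀ l : ℝ, lamt₀ < l → ∀ α ∈ D l, Q (l / a α) ≠ α := by
    intro l hll α hαD heq
    have hl0 : 0 < l := lt_trans hlamt₀pos hll
    rw [hD l] at hαD
    obtain ⟨hIoo, h1, h2⟩ := hαD
    have hapos := ha_pos α hIoo
    by_cases hAS' : (l:EReal) < (A:EReal) * sHi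
    · have hc0 := hpos l hll hl0 hAS'
      have hmem : α ∈ Dt l := by
        apply hDsubDt
        rw [hD l]
        exact ⟨hIoo, h1, h2⟩
      have h3 := hcLe l hl0 α hmem
      rw [hQh_eq _ h1, heq] at h3
      have h4 : t' < α := hIoo.1
      linarith
    · rcases hcase with htop | ⟨S, hS, hSlo⟩
      · exact hAS' (by
          rw [htop, EReal.mul_top_of_pos (by exact_mod_cast hA0)]
          exact EReal.coe_lt_top l)
      · rw [hS, ← EReal.coe_mul] at hAS'
        have h5 : A * S ≤ l := not_lt.1 (fun h => hAS' (EReal.coe_lt_coe_iff.2 h))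
        rw [hS, EReal.coe_lt_coe_iff] at h2
        have hS0 : 0 < S := lt_of_le_of_lt hsLo hSlo
        rw [div_lt_iff₀ hapos] at h2
        have h6 : a α ≤ A := haA α (Ioo_subset_Icc_self hIoo)
        nlinarith
  refine ⟨lam₀, lamt₀, ⟨⟨hlam₀pos, hlam₀AS, hclam₀⟩, ?_⟩,
    ⟨⟨hlamt₀pos, hlamt₀AS, hclamt₀⟩, ?_⟩,
    hlam₀pos, hlam₀le₁, hlamt₀AS, hneg,
    (fun l h1 h2 => hpos l h1 (lt_trans hlamt₀pos h1) h2), hfix, hnofix⟩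
  · intro z hz
    by_contra h
    push_neg at h
    have h1 := hneg z hz.1 h
    rw [hz.2.2] at h1
    exact lt_irrefl 0 h1
  · intro z hz
    by_contra h
    push_neg at h
    have h1 := hpos z h hz.1 hz.2.1
    rw [hz.2.2] at h1
    exact lt_irrefl 0 h1
end

section
/- Assume Q is strictly increasing, with inverse Q⁻¹ : (0,∞) → (s₋,s₊). The function H(α) := a(α)Q⁻¹(α), α ∈ (t',t''), extends continuously to [t',t''] with H(t') = H(t'') = 0; set λ₀ := max_{α∈[t',t'']} H(α) > 0. Then: (i) if 0 < λ < λ₀, P_λ has at least two fixed points α₁ < α₂ in D_λ; (ii) if λ = λ₀, P_λ has at least one fixed point in D_λ; (iii) if λ > λ₀, P_λ has no fixed point in D_λ. -/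
open Set Filter Topology

/- With Q strictly increasing (inverse R = Q⁻¹), H(α) = a(α)Q⁻¹(α) extends continuously to
   [t',t''] with H(t') = H(t'') = 0; λ₀ := max H > 0; for 0 < λ < λ₀ the map P_λ has at
   least two fixed points in D_λ; for λ = λ₀ at least one; for λ > λ₀ none. -/
theorem stmt13 (t' t'' sLo : ℝ) (sHi : EReal) (a Q R : ℝ → ℝ)
    (ht' : 0 ≤ t') (ht : t' < t'')
    (ha_cont : ContinuousOn a (Icc t' t''))
    (ha_t' : a t' = 0) (ha_t'' : a t'' = 0)
    (ha_pos : ∀ α ∈ Ioo t' t'', 0 < a α)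
    (hsLo : 0 ≤ sLo) (hs : (sLo : EReal) < sHi)
    (hQ_cont : ContinuousOn Q {s : ℝ | sLo < s ∧ (s : EReal) < sHi})
    (hQ_pos : ∀ s : ℝ, sLo < s → (s : EReal) < sHi → 0 < Q s)
    (hQ_zero : Tendsto Q (𝓝[>] sLo) (𝓝 0))
    (hQ_top : Tendsto Q (comap (fun s : ℝ => (s : EReal)) (𝓝[<] sHi)) atTop)
    (hQ_mono : StrictMonoOn Q {s : ℝ | sLo < s ∧ (s : EReal) < sHi})
    (hR₁ : ∀ y : ℝ, 0 < y → (sLo < R y ∧ ((R y : ℝ) : EReal) < sHi) ∧ Q (R y) = y)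
    (hR₂ : ∀ s : ℝ, sLo < s → (s : EReal) < sHi → R (Q s) = s)
    (D : ℝ → Set ℝ)
    (hD : ∀ l : ℝ, D l =
      {α : ℝ | α ∈ Ioo t' t'' ∧ sLo < l / a α ∧ ((l / a α : ℝ) : EReal) < sHi}) :
    ∃ Hbar : ℝ → ℝ,
      ContinuousOn Hbar (Icc t' t'') ∧
      (∀ α ∈ Ioo t' t'', Hbar α = a α * R α) ∧
      Hbar t' = 0 ∧ Hbar t'' = 0 ∧
      ∃ lam₀ : ℝ, IsGreatest (Hbar '' Icc t' t'') lam₀ ∧ 0 < lam₀ ∧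
        (∀ lam : ℝ, 0 < lam → lam < lam₀ →
          ∃ α₁ α₂ : ℝ, α₁ ∈ D lam ∧ α₂ ∈ D lam ∧ α₁ < α₂ ∧
            Q (lam / a α₁) = α₁ ∧ Q (lam / a α₂) = α₂) ∧
        (∃ α ∈ D lam₀, Q (lam₀ / a α) = α) ∧
        (∀ lam : ℝ, lam₀ < lam → ∀ α ∈ D lam, Q (lam / a α) ≠ α) := by
  classical
  set S : Set ℝ := {s : ℝ | sLo < s ∧ (s : EReal) < sHi} with hSdef
  have ht''pos : (0:ℝ) < t'' := lt_of_le_of_lt ht' ht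
  -- R is strictly monotone on (0,∞)
  have hRmono : StrictMonoOn R (Ioi (0:ℝ)) := by
    intro y1 h1 y2 h2 h12
    have e1 := hR₁ y1 h1
    have e2 := hR₁ y2 h2
    have : Q (R y1) < Q (R y2) := by rw [e1.2, e2.2]; exact h12
    exact (hQ_mono.lt_iff_lt e1.1 e2.1).mp this
  -- R is continuous on (0,∞)
  have hRcont : ∀ y : ℝ, 0 < y → ContinuousAt R y := by
    intro y hy
    apply continuousAt_of_monotoneOn_of_exists_between (hRmono.monotoneOn) (Ioi_mem_nhds hy)
    · intro b hb
      have e := hR₁ y hy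
      have hmax : max b sLo < R y := max_lt hb e.1.1
      obtain ⟨s', hs1, hs2⟩ := exists_between hmax
      have hs'S : s' ∈ S := ⟨lt_of_le_of_lt (le_max_right b sLo) hs1,
        lt_trans (by exact_mod_cast hs2) e.1.2⟩
      refine ⟨Q s', hQ_pos s' hs'S.1 hs'S.2, ?_⟩
      rw [hR₂ s' hs'S.1 hs'S.2]
      exact ⟨lt_of_le_of_lt (le_max_left b sLo) hs1, hs2⟩
    · intro b hb
      have e := hR₁ y hy
      obtain ⟨x, hx1, hx2⟩ := EReal.lt_iff_exists_real_btwn.mp e.1.2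
      have hx1' : R y < x := by exact_mod_cast hx1
      set s' := min x ((R y + b) / 2) with hs'
      have hs'1 : R y < s' := lt_min hx1' (by linarith)
      have hs'b : s' < b := lt_of_le_of_lt (min_le_right _ _) (by linarith)
      have hs'S : s' ∈ S := ⟨lt_trans e.1.1 hs'1,
        lt_of_le_of_lt (by exact_mod_cast min_le_left x ((R y + b) / 2)) hx2⟩
      refine ⟨Q s', hQ_pos s' hs'S.1 hs'S.2, ?_⟩
      rw [hR₂ s' hs'S.1 hs'S.2]
      exact ⟨hs'1, hs'b⟩
  set Hb : ℝ → ℝ := fun α => a α * R α with hHbdef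
  have hHt' : Hb t' = 0 := by simp [hHbdef, ha_t']
  have hHt'' : Hb t'' = 0 := by simp [hHbdef, ha_t'']
  have hRt''nonneg : 0 ≤ R t'' := le_of_lt (lt_of_le_of_lt hsLo (hR₁ t'' ht''pos).1.1)
  -- bounds
  have hbound : ∀ α ∈ Icc t' t'', 0 ≤ Hb α ∧ Hb α ≤ a α * R t'' := by
    intro α hα
    by_cases hio : α ∈ Ioo t' t''
    · have hαpos : 0 < α := lt_of_le_of_lt ht' hio.1
      have haα := ha_pos α hio
      have hRα : 0 < R α := lt_of_le_of_lt hsLo (hR₁ α hαpos).1.1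
      have hRle : R α ≤ R t'' := le_of_lt (hRmono hαpos ht''pos hio.2)
      exact ⟨le_of_lt (mul_pos haα hRα),
        mul_le_mul_of_nonneg_left hRle (le_of_lt haα)⟩
    · have : α = t' ∨ α = t'' := by
        rcases lt_or_ge t' α with h | h
        · right
          rcases lt_or_ge α t'' with h2 | h2
          · exact absurd ⟨h, h2⟩ hio
          · exact le_antisymm hα.2 h2
        · left; exact le_antisymm h hα.1
      rcases this with rfl | rfl
      · simp [hHbdef, ha_t']
      · simp [hHbdef, ha_t'']
  -- continuity of Hb on [t', t'']
  have hHcont : ContinuousOn Hb (Icc t' t'') := by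
    intro x hx
    by_cases hio : x ∈ Ioo t' t''
    · have hxpos : 0 < x := lt_of_le_of_lt ht' hio.1
      exact (ha_cont x hx).mul ((hRcont x hxpos).continuousWithinAt)
    · have hax : a x = 0 := by
        have : x = t' ∨ x = t'' := by
          rcases lt_or_ge t' x with h | h
          · right
            rcases lt_or_ge x t'' with h2 | h2
            · exact absurd ⟨h, h2⟩ hio
            · exact le_antisymm hx.2 h2
          · left; exact le_antisymm h hx.1
        rcases this with rfl | rfl
        · exact ha_t'
        · exact ha_t''
      have hHx : Hb x = 0 := by simp [hHbdef, hax]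
      unfold ContinuousWithinAt
      rw [hHx]
      have htend : Tendsto (fun α => a α * R t'') (𝓝[Icc t' t''] x) (𝓝 0) := by
        have := ((ha_cont x hx).mul (continuousWithinAt_const (b := R t'')))
        unfold ContinuousWithinAt at this
        rw [Pi.mul_apply, hax] at this
        simp only [hax, zero_mul] at this
        exact this
      apply squeeze_zero' ?_ ?_ htend
      · exact eventually_nhdsWithin_of_forall (fun α hα => (hbound α hα).1)
      · exact eventually_nhdsWithin_of_forall (fun α hα => (hbound α hα).2)
  -- the maximum
  obtain ⟨lam₀, hlmem, hlub⟩ :=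
    (isCompact_Icc.image_of_continuousOn hHcont).exists_isGreatest
      ((nonempty_Icc.mpr (le_of_lt ht)).image Hb)
  have hgreat : IsGreatest (Hb '' Icc t' t'') lam₀ := ⟨hlmem, hlub⟩
  -- λ₀ > 0
  have hmid : (t' + t'') / 2 ∈ Ioo t' t'' := ⟨by linarith, by linarith⟩
  have hlam₀pos : 0 < lam₀ := by
    have hmpos : 0 < (t' + t'') / 2 := lt_of_le_of_lt ht' hmid.1
    have h1 : 0 < Hb ((t' + t'') / 2) :=
      mul_pos (ha_pos _ hmid) (lt_of_le_of_lt hsLo (hR₁ _ hmpos).1.1)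
    exact lt_of_lt_of_le h1 (hlub ⟨_, ⟨le_of_lt hmid.1, le_of_lt hmid.2⟩, rfl⟩)
  -- key lemma A: Hb α = lam on the interior gives a fixed point
  have keyA : ∀ lam α, α ∈ Ioo t' t'' → Hb α = lam →
      α ∈ D lam ∧ Q (lam / a α) = α := by
    intro lam α hα hlam
    have hαpos : 0 < α := lt_of_le_of_lt ht' hα.1
    have haα := ha_pos α hα
    have e := hR₁ α hαpos
    have hdiv : lam / a α = R α := by
      rw [← hlam]
      exact mul_div_cancel_left₀ (R α) (ne_of_gt haα)
    constructor
    · rw [hD]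
      exact ⟨hα, by rw [hdiv]; exact e.1.1, by rw [hdiv]; exact e.1.2⟩
    · rw [hdiv]; exact e.2
  -- key lemma B: a fixed point gives Hb α = lam
  have keyB : ∀ lam α, α ∈ D lam → Q (lam / a α) = α →
      Hb α = lam ∧ α ∈ Ioo t' t'' := by
    intro lam α hα hfix
    rw [hD] at hα
    obtain ⟨hio, h1, h2⟩ := hα
    have haα := ha_pos α hio
    have hRα : R α = lam / a α := by
      have h3 := hR₂ _ h1 h2
      rwa [hfix] at h3
    refine ⟨?_, hio⟩
    show a α * R α = lam
    rw [hRα, mul_comm, div_mul_cancel₀ lam (ne_of_gt haα)]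
  -- assemble
  refine ⟨Hb, hHcont, fun α _ => rfl, hHt', hHt'', lam₀, hgreat, hlam₀pos, ?_, ?_, ?_⟩
  · -- two fixed points for 0 < lam < lam₀
    intro lam hlam hlamlt
    obtain ⟨αs, hαsIcc, hαsval⟩ := hlmem
    have hαsIoo : αs ∈ Ioo t' t'' := by
      constructor
      · rcases eq_or_lt_of_le hαsIcc.1 with h | h
        · exfalso; rw [← h, hHt'] at hαsval; linarith
        · exact h
      · rcases eq_or_lt_of_le hαsIcc.2 with h | h
        · exfalso; rw [h, hHt''] at hαsval; linarith
        · exact h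
    -- IVT on [t', αs]
    have hsub1 : Icc t' αs ⊆ Icc t' t'' := Icc_subset_Icc le_rfl hαsIcc.2
    have hiv1 : lam ∈ Hb '' Icc t' αs := by
      apply intermediate_value_Icc hαsIcc.1 (hHcont.mono hsub1)
      rw [hHt', hαsval]
      exact ⟨le_of_lt hlam, le_of_lt hlamlt⟩
    obtain ⟨α₁, hα₁mem, hα₁val⟩ := hiv1
    -- IVT on [αs, t'']
    have hsub2 : Icc αs t'' ⊆ Icc t' t'' := Icc_subset_Icc hαsIcc.1 le_rfl
    have hiv2 : lam ∈ Hb '' Icc αs t'' := by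
      apply intermediate_value_Icc' hαsIcc.2 (hHcont.mono hsub2)
      rw [hHt'', hαsval]
      exact ⟨le_of_lt hlam, le_of_lt hlamlt⟩
    obtain ⟨α₂, hα₂mem, hα₂val⟩ := hiv2
    have hα₁lt : α₁ < αs := by
      rcases eq_or_lt_of_le hα₁mem.2 with h | h
      · exfalso; rw [h, hαsval] at hα₁val; linarith
      · exact h
    have hα₂gt : αs < α₂ := by
      rcases eq_or_lt_of_le hα₂mem.1 with h | h
      · exfalso; rw [← h, hαsval] at hα₂val; linarith
      · exact h
    have hα₁Ioo : α₁ ∈ Ioo t' t'' := by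
      refine ⟨?_, lt_of_lt_of_le hα₁lt hαsIcc.2⟩
      rcases eq_or_lt_of_le hα₁mem.1 with h | h
      · exfalso; rw [← h, hHt'] at hα₁val; linarith
      · exact h
    have hα₂Ioo : α₂ ∈ Ioo t' t'' := by
      refine ⟨lt_of_le_of_lt hαsIcc.1 hα₂gt, ?_⟩
      rcases eq_or_lt_of_le hα₂mem.2 with h | h
      · exfalso; rw [h, hHt''] at hα₂val; linarith
      · exact h
    obtain ⟨hD1, hQ1⟩ := keyA lam α₁ hα₁Ioo hα₁val
    obtain ⟨hD2, hQ2⟩ := keyA lam α₂ hα₂Ioo hα₂val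
    exact ⟨α₁, α₂, hD1, hD2, lt_trans hα₁lt hα₂gt, hQ1, hQ2⟩
  · -- one fixed point for lam = lam₀
    obtain ⟨αs, hαsIcc, hαsval⟩ := hlmem
    have hαsIoo : αs ∈ Ioo t' t'' := by
      constructor
      · rcases eq_or_lt_of_le hαsIcc.1 with h | h
        · exfalso; rw [← h, hHt'] at hαsval; linarith
        · exact h
      · rcases eq_or_lt_of_le hαsIcc.2 with h | h
        · exfalso; rw [h, hHt''] at hαsval; linarith
        · exact h
    obtain ⟨hDs, hQs⟩ := keyA lam₀ αs hαsIoo hαsval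
    exact ⟨αs, hDs, hQs⟩
  · -- no fixed points for lam > lam₀
    intro lam hlam α hα hfix
    obtain ⟨hval, hio⟩ := keyB lam α hα hfix
    have : Hb α ≤ lam₀ := hlub ⟨α, ⟨le_of_lt hio.1, le_of_lt hio.2⟩, rfl⟩
    rw [hval] at this
    linarith
end
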